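/- arXiv:2508.06270 — 9 statements merged into one kernel-verified Lean document; each statement's English description precedes it below -/
import Mathlib

section
/- The improper integral ∫₀^∞ (1/r²)·(1 − (1+2κr+2κ²r²)e^{-2κr}) dr equals κ, for any κ > 0. Consequently the BLTP field energy of a point charge Q is (Q²/2)·κ, which is finite. -/
open Real MeasureTheory Set Filter Topology

/-- ∫₀^∞ (1/r²)(1 − (1+2κr+2κ²r²)e^{-2κr}) dr = κ, hence the BLTP field energy
of a point charge Q is (Q²/2)·κ, which is finite. -/
theorem stmt2 (κ : ℝ) (hκ : 0 < κ) (Q : ℝ) :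
    (∫ r in Set.Ioi (0:ℝ),
      (1 / r ^ 2) * (1 - (1 + 2 * κ * r + 2 * κ ^ 2 * r ^ 2) * Real.exp (-(2 * κ * r)))) = κ ∧
    (Q ^ 2 / 2) * (∫ r in Set.Ioi (0:ℝ),
      (1 / r ^ 2) * (1 - (1 + 2 * κ * r + 2 * κ ^ 2 * r ^ 2) * Real.exp (-(2 * κ * r)))) =
      Q ^ 2 * κ / 2 := by
  set F : ℝ → ℝ := fun x =>
    -((2 * κ ^ 2 * x + κ) * Real.exp (-(2 * κ * x))) -
      (1 - (1 + 2 * κ * x + 2 * κ ^ 2 * x ^ 2) * Real.exp (-(2 * κ * x))) / x with hF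
  set f : ℝ → ℝ := fun r =>
    (1 / r ^ 2) * (1 - (1 + 2 * κ * r + 2 * κ ^ 2 * r ^ 2) * Real.exp (-(2 * κ * r))) with hf
  have hE : ∀ x : ℝ, HasDerivAt (fun y => Real.exp (-(2 * κ * y)))
      (Real.exp (-(2 * κ * x)) * (-(2 * κ))) x := by
    intro x
    have h1 : HasDerivAt (fun y : ℝ => -(2 * κ * y)) (-(2 * κ)) x := by
      simpa [Pi.neg_def] using ((hasDerivAt_id x).const_mul (2 * κ)).neg
    exact (Real.hasDerivAt_exp _).comp x h1
  have hderiv : ∀ x ∈ Ioi (0:ℝ), HasDerivAt F (f x) x := by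
    intro x hx
    have hx0 : x ≠ 0 := ne_of_gt hx
    have h1 : HasDerivAt (fun y : ℝ => 2 * κ ^ 2 * y + κ) (2 * κ ^ 2) x := by
      simpa using ((hasDerivAt_id x).const_mul (2 * κ ^ 2)).add_const κ
    have h2 : HasDerivAt (fun y : ℝ => 1 + 2 * κ * y + 2 * κ ^ 2 * y ^ 2)
        (2 * κ + 2 * κ ^ 2 * (2 * x)) x := by
      have := (((hasDerivAt_id x).const_mul (2 * κ)).const_add 1).add
        (((hasDerivAt_pow 2 x)).const_mul (2 * κ ^ 2))
      simpa [Pi.add_def] using this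
    have hA := (h1.mul (hE x)).neg
    have hnum := ((h2.mul (hE x)).const_sub 1)
    have hB := hnum.div (hasDerivAt_id x) hx0
    have := hA.sub hB
    refine this.congr_deriv ?_
    simp only [hf, id_eq, Pi.mul_apply]
    field_simp
    ring
  have hnonneg : ∀ x ∈ Ioi (0:ℝ), 0 ≤ f x := by
    intro x hx
    have hx0 : (0:ℝ) < x := hx
    have hu : (0:ℝ) ≤ 2 * κ * x := by positivity
    have hq := Real.quadratic_le_exp_of_nonneg hu
    have key : (1 + 2 * κ * x + 2 * κ ^ 2 * x ^ 2) * Real.exp (-(2 * κ * x)) ≤ 1 := by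
      rw [Real.exp_neg, mul_inv_le_iff₀ (Real.exp_pos _)]
      calc (1 + 2 * κ * x + 2 * κ ^ 2 * x ^ 2)
          = 1 + (2*κ*x) + (2*κ*x)^2 / 2 := by ring
        _ ≤ Real.exp (2 * κ * x) := hq
        _ = 1 * Real.exp (2 * κ * x) := (one_mul _).symm
    have h1 : (0:ℝ) ≤ 1 - (1 + 2 * κ * x + 2 * κ ^ 2 * x ^ 2) * Real.exp (-(2 * κ * x)) := by
      linarith
    have h2 : (0:ℝ) ≤ 1 / x ^ 2 := by positivity
    exact mul_nonneg h2 h1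
  have hF0 : F 0 = -κ := by simp [hF]
  have hcont : ContinuousWithinAt F (Ici (0:ℝ)) 0 := by
    have h2 : HasDerivAt (fun y : ℝ => 1 - (1 + 2 * κ * y + 2 * κ ^ 2 * y ^ 2)
        * Real.exp (-(2 * κ * y))) 0 0 := by
      have h2' : HasDerivAt (fun y : ℝ => 1 + 2 * κ * y + 2 * κ ^ 2 * y ^ 2)
          (2 * κ + 2 * κ ^ 2 * (2 * 0)) 0 := by
        have := (((hasDerivAt_id (0:ℝ)).const_mul (2 * κ)).const_add 1).add
          (((hasDerivAt_pow 2 (0:ℝ))).const_mul (2 * κ ^ 2))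
        simpa [Pi.add_def] using this
      have := ((h2'.mul (hE 0)).const_sub 1)
      refine this.congr_deriv ?_
      simp
    have hslope := hasDerivAt_iff_tendsto_slope.mp h2
    have hB : Tendsto (fun x : ℝ => (1 - (1 + 2 * κ * x + 2 * κ ^ 2 * x ^ 2)
        * Real.exp (-(2 * κ * x))) / x) (𝓝[≠] (0:ℝ)) (𝓝 0) := by
      refine hslope.congr ?_
      intro x
      rw [slope_def_field]
      simp
    have hA : Tendsto (fun x : ℝ => -((2 * κ ^ 2 * x + κ) * Real.exp (-(2 * κ * x))))
        (𝓝[≠] (0:ℝ)) (𝓝 (-κ)) := by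
      have hc : ContinuousAt (fun x : ℝ => -((2 * κ ^ 2 * x + κ) * Real.exp (-(2 * κ * x)))) 0 :=
        by fun_prop
      have := (hc.continuousWithinAt (s := {(0:ℝ)}ᶜ))
      simpa [ContinuousWithinAt] using this
    have hFf : Tendsto F (𝓝[≠] (0:ℝ)) (𝓝 (-κ)) := by
      have := hA.sub hB
      simpa [hF] using this
    rw [continuousWithinAt_diff_self.symm] at *
    rw [ContinuousWithinAt, hF0]
    exact hFf.mono_left (nhdsWithin_mono _ (fun x hx => hx.2))
  have htop : Tendsto F atTop (𝓝 0) := by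
    have hmap : Tendsto (fun x : ℝ => 2 * κ * x) atTop atTop :=
      Tendsto.const_mul_atTop (by positivity) tendsto_id
    have hexp : Tendsto (fun x : ℝ => Real.exp (-(2 * κ * x))) atTop (𝓝 0) :=
      (Real.tendsto_exp_neg_atTop_nhds_zero.comp hmap)
    have hpe : ∀ n : ℕ, Tendsto (fun x : ℝ => (2 * κ * x) ^ n * Real.exp (-(2 * κ * x)))
        atTop (𝓝 0) := fun n =>
      ((Real.tendsto_pow_mul_exp_neg_atTop_nhds_zero n).comp hmap)
    have hxe : Tendsto (fun x : ℝ => x * Real.exp (-(2 * κ * x))) atTop (𝓝 0) := by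
      have := (hpe 1).const_mul (1 / (2 * κ))
      have h2κ : (2 * κ) ≠ 0 := by positivity
      refine this.congr' (Eventually.of_forall fun x => ?_) |>.mono_right (by simp)
      field_simp
    have hx2e : Tendsto (fun x : ℝ => x ^ 2 * Real.exp (-(2 * κ * x))) atTop (𝓝 0) := by
      have := (hpe 2).const_mul (1 / (2 * κ) ^ 2)
      have h2κ : (2 * κ) ≠ 0 := by positivity
      refine this.congr' (Eventually.of_forall fun x => ?_) |>.mono_right (by simp)
      field_simp
    have hinv : Tendsto (fun x : ℝ => 1 / x) atTop (𝓝 0) := by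
      simpa using (tendsto_inv_atTop_zero (𝕜 := ℝ))
    -- g x → 0, so (1 - g x) * (1/x) → 1 * 0 = 0
    have hg : Tendsto (fun x : ℝ => (1 + 2 * κ * x + 2 * κ ^ 2 * x ^ 2)
        * Real.exp (-(2 * κ * x))) atTop (𝓝 0) := by
      have : Tendsto (fun x : ℝ => Real.exp (-(2 * κ * x)) + 2 * κ * (x * Real.exp (-(2 * κ * x)))
          + 2 * κ ^ 2 * (x ^ 2 * Real.exp (-(2 * κ * x)))) atTop (𝓝 (0 + 2 * κ * 0 + 2 * κ ^ 2 * 0)) :=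
        (hexp.add (hxe.const_mul _)).add (hx2e.const_mul _)
      refine (this.congr fun x => by ring).mono_right (by simp)
    have hsecond : Tendsto (fun x : ℝ => (1 - (1 + 2 * κ * x + 2 * κ ^ 2 * x ^ 2)
        * Real.exp (-(2 * κ * x))) / x) atTop (𝓝 0) := by
      have h1 : Tendsto (fun x : ℝ => (1 - (1 + 2 * κ * x + 2 * κ ^ 2 * x ^ 2)
          * Real.exp (-(2 * κ * x)))) atTop (𝓝 (1 - 0)) := (tendsto_const_nhds).sub hg
      have := h1.mul hinv
      refine (this.congr fun x => by ring).mono_right (by simp)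
    have hfirst : Tendsto (fun x : ℝ => -((2 * κ ^ 2 * x + κ) * Real.exp (-(2 * κ * x))))
        atTop (𝓝 0) := by
      have : Tendsto (fun x : ℝ => -(2 * κ ^ 2 * (x * Real.exp (-(2 * κ * x)))
          + κ * Real.exp (-(2 * κ * x)))) atTop (𝓝 (-(2 * κ ^ 2 * 0 + κ * 0))) :=
        ((hxe.const_mul _).add (hexp.const_mul _)).neg
      refine (this.congr fun x => by ring).mono_right (by simp)
    have := hfirst.sub hsecond
    simpa [hF] using this
  have key : (∫ r in Ioi (0:ℝ), f r) = κ := by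
    rw [integral_Ioi_of_hasDerivAt_of_nonneg hcont hderiv hnonneg htop, hF0]
    ring
  exact ⟨key, by rw [key]; ring⟩
end

section
/- Let h ≥ 0 and let U_h(s) := U(1−h, 2, s) denote Tricomi's confluent hypergeometric function of the second kind with these parameters. For 0 ≤ h < 1 and all s ≥ 4h, one has 0.232/((1−h)·Γ(1−h)) · s^{-1}(1+s)^h ≤ U_h(s) ≤ 1.37/((1−h)·Γ(1−h)) · s^{-1}(1+s)^h. -/
open Real MeasureTheory

/-- Tricomi's function U_h(s) = U(1−h, 2, s), given for 0 ≤ h < 1 by the integral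
representation Γ(1−h)·U_h(s) = ∫₀^∞ e^{-ts} t^{-h}(1+t)^h dt. -/
noncomputable def Uh (h s : ℝ) : ℝ :=
  (Real.Gamma (1 - h))⁻¹ * ∫ t in Set.Ioi (0:ℝ), Real.exp (-(t * s)) * t ^ (-h) * (1 + t) ^ h

/-- For 0 ≤ h < 1 and s ≥ 4h (in the domain s > 0), one has
0.232/((1−h)Γ(1−h)) s⁻¹(1+s)^h ≤ U_h(s) ≤ 1.37/((1−h)Γ(1−h)) s⁻¹(1+s)^h. -/
theorem stmt4 (h : ℝ) (hh0 : 0 ≤ h) (hh1 : h < 1) (s : ℝ) (hs : 4 * h ≤ s) (hs0 : 0 < s) :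
    0.232 / ((1 - h) * Real.Gamma (1 - h)) * (s⁻¹ * (1 + s) ^ h) ≤ Uh h s ∧
    Uh h s ≤ 1.37 / ((1 - h) * Real.Gamma (1 - h)) * (s⁻¹ * (1 + s) ^ h) := by
  have h1h : (0:ℝ) < 1 - h := by linarith
  set G := Real.Gamma (1 - h) with hGdef
  have hG : 0 < G := Real.Gamma_pos_of_pos h1h
  set f : ℝ → ℝ := fun t => Real.exp (-(t * s)) * t ^ (-h) * (1 + t) ^ h with hfdef
  set g0 : ℝ → ℝ := fun t => Real.exp (-(t * s)) * t ^ (-h) with hg0def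
  -- integrability of the gamma-type integrands
  have hg0_int : IntegrableOn g0 (Set.Ioi 0) := by
    have := integrableOn_rpow_mul_exp_neg_mul_rpow (s := -h) (p := 1) (b := s)
      (by linarith) zero_lt_one hs0
    refine this.congr_fun (fun t ht => ?_) measurableSet_Ioi
    beta_reduce; rw [Real.rpow_one]; simp only [hg0def]; ring_nf
  have hg1_int : IntegrableOn (fun t : ℝ => Real.exp (-(t*s)) * t ^ (1-h)) (Set.Ioi 0) := by
    have := integrableOn_rpow_mul_exp_neg_mul_rpow (s := 1-h) (p := 1) (b := s)
      (by linarith) zero_lt_one hs0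
    refine this.congr_fun (fun t ht => ?_) measurableSet_Ioi
    beta_reduce; rw [Real.rpow_one]; ring_nf
  have key : ∫ t in Set.Ioi (0:ℝ), g0 t = (1/s) ^ (1-h) * G := by
    rw [hGdef, ← Real.integral_rpow_mul_exp_neg_mul_Ioi h1h hs0]
    refine setIntegral_congr_fun measurableSet_Ioi (fun t ht => ?_)
    simp only [hg0def]
    rw [show (1:ℝ)-h-1 = -h by ring, mul_comm s t]; ring
  -- nonnegativity and measurability of f
  have hf_nonneg : ∀ t : ℝ, 0 < t → 0 ≤ f t := fun t ht =>
    mul_nonneg (mul_nonneg (Real.exp_pos _).le (Real.rpow_nonneg ht.le _))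
      (Real.rpow_nonneg (by linarith) _)
  have hf_meas : AEStronglyMeasurable f (volume.restrict (Set.Ioi 0)) := by
    refine ContinuousOn.aestronglyMeasurable ?_ measurableSet_Ioi
    refine ContinuousOn.mul (ContinuousOn.mul ?_ ?_) ?_
    · exact (Real.continuous_exp.comp (continuous_id.mul continuous_const).neg).continuousOn
    · exact fun t ht => (Real.continuousAt_rpow_const t (-h) (Or.inl (ne_of_gt ht))).continuousWithinAt
    · exact fun t ht => ((continuous_const.add continuous_id).continuousAt.rpow_const
        (Or.inl (by simp at ht; exact ne_of_gt (show (0:ℝ) < 1 + t by linarith)))).continuousWithinAt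
  -- integrability of f
  have hf_int : IntegrableOn f (Set.Ioi 0) := by
    refine Integrable.mono' (hg0_int.add hg1_int) hf_meas ?_
    filter_upwards [ae_restrict_mem measurableSet_Ioi] with t ht
    have ht0 : (0:ℝ) < t := ht
    rw [Real.norm_eq_abs, abs_of_nonneg (hf_nonneg t ht0)]
    have h1 : (1 + t) ^ h ≤ 1 + t := by
      nth_rewrite 2 [show 1 + t = (1+t) ^ (1:ℝ) by rw [Real.rpow_one]]
      exact Real.rpow_le_rpow_of_exponent_le (by linarith) hh1.le
    have h2 : f t ≤ Real.exp (-(t*s)) * t ^ (-h) * (1 + t) := by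
      refine mul_le_mul_of_nonneg_left h1 ?_
      exact mul_nonneg (Real.exp_pos _).le (Real.rpow_nonneg ht0.le _)
    have h3 : Real.exp (-(t*s)) * t ^ (-h) * (1 + t)
        = g0 t + Real.exp (-(t*s)) * t ^ (1-h) := by
      have : t ^ (-h) * t = t ^ (1-h) := by
        rw [show (1:ℝ)-h = -h + 1 by ring, Real.rpow_add ht0, Real.rpow_one]
      simp only [hg0def]
      rw [mul_add, mul_one, ← this]; ring
    calc f t ≤ Real.exp (-(t*s)) * t ^ (-h) * (1 + t) := h2
      _ = g0 t + Real.exp (-(t*s)) * t ^ (1-h) := h3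
  -- lower bound on the integral
  have hIlow : (1/s) ^ (1-h) * G ≤ ∫ t in Set.Ioi (0:ℝ), f t := by
    rw [← key]
    refine setIntegral_mono_on hg0_int hf_int measurableSet_Ioi (fun t ht => ?_)
    have ht0 : (0:ℝ) < t := ht
    have : (1:ℝ) ≤ (1 + t) ^ h := Real.one_le_rpow (by linarith) hh0
    calc g0 t = g0 t * 1 := by ring
      _ ≤ g0 t * (1+t)^h := by
          refine mul_le_mul_of_nonneg_left this ?_
          exact mul_nonneg (Real.exp_pos _).le (Real.rpow_nonneg ht0.le _)
  -- the exponential comparisons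
  have hexp14 : (1 + s) ^ h ≤ s ^ h * Real.exp 4⁻¹ := by
    have e1 : (1:ℝ) + s = s * (s⁻¹ + 1) := by field_simp
    have e2 : (1 + s) ^ h = s ^ h * (s⁻¹ + 1) ^ h := by
      rw [e1, Real.mul_rpow hs0.le (by positivity)]
    have e3 : (s⁻¹ + 1) ^ h ≤ Real.exp (s⁻¹ * h) := by
      calc (s⁻¹ + 1) ^ h ≤ (Real.exp s⁻¹) ^ h :=
            Real.rpow_le_rpow (by positivity) (Real.add_one_le_exp s⁻¹) hh0
        _ = Real.exp (s⁻¹ * h) := (Real.exp_mul s⁻¹ h).symm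
    have e4 : s⁻¹ * h ≤ 4⁻¹ := by
      have h1 : s⁻¹ * (4 * h) ≤ s⁻¹ * s := mul_le_mul_of_nonneg_left hs (by positivity)
      rw [inv_mul_cancel₀ hs0.ne'] at h1
      nlinarith
    rw [e2]
    exact mul_le_mul_of_nonneg_left (e3.trans (Real.exp_le_exp.2 e4)) (Real.rpow_nonneg hs0.le _)
  -- Gamma lower bound : exp(-1) ≤ (1-h) * G
  have hGlow : Real.exp (-1) ≤ (1 - h) * G := by
    have hGi : G = ∫ x in Set.Ioi (0:ℝ), Real.exp (-x) * x ^ (-h) := by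
      rw [hGdef, Real.Gamma_eq_integral h1h, show (1:ℝ)-h-1 = -h by ring]
    have int0 : IntegrableOn (fun x : ℝ => Real.exp (-x) * x ^ (-h)) (Set.Ioi 0) := by
      have := Real.GammaIntegral_convergent h1h
      rwa [show (1:ℝ)-h-1 = -h by ring] at this
    have int_r : IntegrableOn (fun x : ℝ => x ^ (-h)) (Set.Ioc 0 1) :=
      (intervalIntegral.intervalIntegrable_rpow' (by linarith : (-1:ℝ) < -h)).1
    have step3 : ∫ x in Set.Ioc (0:ℝ) 1, Real.exp (-1) * x ^ (-h)
        = Real.exp (-1) * (1-h)⁻¹ := by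
      rw [MeasureTheory.integral_const_mul]
      congr 1
      rw [← intervalIntegral.integral_of_le zero_le_one,
        integral_rpow (Or.inl (by linarith : (-1:ℝ) < -h)),
        Real.one_rpow, Real.zero_rpow (by linarith : -h + 1 ≠ 0)]
      rw [show -h + 1 = 1 - h by ring]
      field_simp
      norm_num
    have step2 : ∫ x in Set.Ioc (0:ℝ) 1, Real.exp (-1) * x ^ (-h)
        ≤ ∫ x in Set.Ioc (0:ℝ) 1, Real.exp (-x) * x ^ (-h) := by
      refine setIntegral_mono_on (int_r.const_mul _)
        (int0.mono_set Set.Ioc_subset_Ioi_self) measurableSet_Ioc (fun x hx => ?_)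
      exact mul_le_mul_of_nonneg_right (Real.exp_le_exp.2 (by linarith [hx.2]))
        (Real.rpow_nonneg hx.1.le _)
    have step1 : ∫ x in Set.Ioc (0:ℝ) 1, Real.exp (-x) * x ^ (-h)
        ≤ ∫ x in Set.Ioi (0:ℝ), Real.exp (-x) * x ^ (-h) := by
      refine setIntegral_mono_set int0 ?_ (Set.Ioc_subset_Ioi_self.eventuallyLE)
      filter_upwards [ae_restrict_mem measurableSet_Ioi] with x hx
      exact mul_nonneg (Real.exp_pos _).le (Real.rpow_nonneg (le_of_lt hx) _)
    have : Real.exp (-1) * (1-h)⁻¹ ≤ G := by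
      have hA := step2.trans step1
      rw [step3] at hA
      rw [hGi]; exact hA
    calc Real.exp (-1) = (Real.exp (-1) * (1-h)⁻¹) * (1-h) := by field_simp
      _ ≤ G * (1-h) := mul_le_mul_of_nonneg_right this h1h.le
      _ = (1-h) * G := by ring
  -- numeric : 0.232 * exp(1/4) ≤ exp(-1)
  have hnum : (0.232:ℝ) * Real.exp 4⁻¹ ≤ Real.exp (-1) := by
    have h5 : Real.exp (5/4) ≤ 4.31 := by
      have e1 : Real.exp (5/4) ^ (4:ℕ) = Real.exp 1 ^ (5:ℕ) := by
        rw [← Real.exp_nat_mul, ← Real.exp_nat_mul]; norm_num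
      refine le_of_pow_le_pow_left₀ (n := 4) (by norm_num) (by norm_num) ?_
      rw [e1]
      calc Real.exp 1 ^ 5 ≤ 2.7182818286 ^ 5 :=
            pow_le_pow_left₀ (Real.exp_pos 1).le Real.exp_one_lt_d9.le 5
        _ ≤ 4.31 ^ 4 := by norm_num
    have e2 : Real.exp 4⁻¹ = Real.exp (5/4) * Real.exp (-1) := by
      rw [← Real.exp_add]; norm_num
    rw [e2]
    nlinarith [Real.exp_pos (-1)]
  -- rewrite (1/s)^(1-h)
  have hpow : (1/s) ^ (1-h) = s⁻¹ * s ^ h := by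
    rw [one_div, Real.inv_rpow hs0.le, ← Real.rpow_neg hs0.le,
      show -(1-h) = h + (-1) by ring, Real.rpow_add hs0, Real.rpow_neg_one, mul_comm]
  constructor
  · -- lower bound
    show _ ≤ G⁻¹ * ∫ t in Set.Ioi (0:ℝ), f t
    have step : G⁻¹ * ((1/s) ^ (1-h) * G) ≤ G⁻¹ * ∫ t in Set.Ioi (0:ℝ), f t :=
      mul_le_mul_of_nonneg_left hIlow (by positivity)
    refine le_trans ?_ step
    rw [show G⁻¹ * ((1/s) ^ (1-h) * G) = (1/s)^(1-h) by field_simp, hpow,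
      div_mul_eq_mul_div, div_le_iff₀ (by positivity)]
    calc (0.232:ℝ) * (s⁻¹ * (1+s)^h) ≤ 0.232 * (s⁻¹ * (s^h * Real.exp 4⁻¹)) := by
          refine mul_le_mul_of_nonneg_left (mul_le_mul_of_nonneg_left hexp14 ?_) (by norm_num)
          positivity
      _ = (s⁻¹ * s^h) * (0.232 * Real.exp 4⁻¹) := by ring
      _ ≤ (s⁻¹ * s^h) * ((1-h)*G) := by
          refine mul_le_mul_of_nonneg_left (hnum.trans hGlow) ?_
          positivity
  · -- upper bound
    -- split the integral at s⁻¹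
    have hsub1 : Set.Ioc (0:ℝ) s⁻¹ ⊆ Set.Ioi 0 := Set.Ioc_subset_Ioi_self
    have hsub2 : Set.Ioi s⁻¹ ⊆ Set.Ioi (0:ℝ) := Set.Ioi_subset_Ioi (by positivity)
    have hsplit : ∫ t in Set.Ioi (0:ℝ), f t
        = (∫ t in Set.Ioc (0:ℝ) s⁻¹, f t) + ∫ t in Set.Ioi s⁻¹, f t := by
      rw [← setIntegral_union (Set.Ioc_disjoint_Ioi le_rfl) measurableSet_Ioi
        (hf_int.mono_set hsub1) (hf_int.mono_set hsub2),
        Set.Ioc_union_Ioi_eq_Ioi (by positivity : (0:ℝ) ≤ s⁻¹)]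
    -- piece 1
    have hp1 : ∫ t in Set.Ioc (0:ℝ) s⁻¹, f t ≤ (1+s⁻¹)^h * ((1/s) ^ (1-h) * G) := by
      calc ∫ t in Set.Ioc (0:ℝ) s⁻¹, f t
          ≤ ∫ t in Set.Ioc (0:ℝ) s⁻¹, (1+s⁻¹)^h * g0 t := by
            refine setIntegral_mono_on (hf_int.mono_set hsub1)
              ((hg0_int.mono_set hsub1).const_mul _) measurableSet_Ioc (fun t ht => ?_)
            have ht0 : 0 < t := ht.1
            have : (1+t)^h ≤ (1+s⁻¹)^h :=
              Real.rpow_le_rpow (by linarith) (by linarith [ht.2]) hh0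
            calc f t ≤ g0 t * (1+s⁻¹)^h := by
                  refine mul_le_mul_of_nonneg_left this ?_
                  exact mul_nonneg (Real.exp_pos _).le (Real.rpow_nonneg ht0.le _)
              _ = (1+s⁻¹)^h * g0 t := by ring
        _ = (1+s⁻¹)^h * ∫ t in Set.Ioc (0:ℝ) s⁻¹, g0 t := MeasureTheory.integral_const_mul _ _
        _ ≤ (1+s⁻¹)^h * ∫ t in Set.Ioi (0:ℝ), g0 t := by
            refine mul_le_mul_of_nonneg_left ?_ (Real.rpow_nonneg (by positivity) _)
            refine setIntegral_mono_set hg0_int ?_ hsub1.eventuallyLE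
            filter_upwards [ae_restrict_mem measurableSet_Ioi] with t ht
            exact mul_nonneg (Real.exp_pos _).le (Real.rpow_nonneg (le_of_lt ht) _)
        _ = (1+s⁻¹)^h * ((1/s) ^ (1-h) * G) := by rw [key]
    -- piece 2
    have hval2 : ∫ t in Set.Ioi s⁻¹, Real.exp (-(t*s)) = s⁻¹ * Real.exp (-1) := by
      have := MeasureTheory.integral_comp_mul_right_Ioi (fun u => Real.exp (-u)) s⁻¹ hs0
      simp only [smul_eq_mul] at this
      rw [this, inv_mul_cancel₀ hs0.ne', integral_exp_neg_Ioi]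
    have hexp_int : IntegrableOn (fun t : ℝ => Real.exp (-(t*s))) (Set.Ioi s⁻¹) := by
      have := exp_neg_integrableOn_Ioi s⁻¹ hs0
      refine this.congr_fun (fun t ht => ?_) measurableSet_Ioi
      beta_reduce; rw [neg_mul, mul_comm]
    have hp2 : ∫ t in Set.Ioi s⁻¹, f t ≤ (1+s)^h * (s⁻¹ * Real.exp (-1)) := by
      calc ∫ t in Set.Ioi s⁻¹, f t
          ≤ ∫ t in Set.Ioi s⁻¹, (1+s)^h * Real.exp (-(t*s)) := by
            refine setIntegral_mono_on (hf_int.mono_set hsub2) (hexp_int.const_mul _)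
              measurableSet_Ioi (fun t ht => ?_)
            have hts : s⁻¹ < t := ht
            have ht0 : 0 < t := lt_trans (by positivity) hts
            have hk : t ^ (-h) * (1+t) ^ h = (t⁻¹ + 1) ^ h := by
              rw [Real.rpow_neg ht0.le, ← Real.inv_rpow ht0.le,
                ← Real.mul_rpow (by positivity) (by positivity)]
              congr 1
              rw [mul_add, mul_one, inv_mul_cancel₀ ht0.ne']
            have hti : t⁻¹ ≤ s := by
              rw [show s = (s⁻¹)⁻¹ by rw [inv_inv]]
              exact (inv_anti₀ (by positivity) hts.le)
            have hle : (t⁻¹ + 1) ^ h ≤ (1+s) ^ h :=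
              Real.rpow_le_rpow (by positivity) (by linarith) hh0
            calc f t = Real.exp (-(t*s)) * (t ^ (-h) * (1+t) ^ h) := by
                  simp only [hfdef]; ring
              _ = Real.exp (-(t*s)) * (t⁻¹ + 1) ^ h := by rw [hk]
              _ ≤ Real.exp (-(t*s)) * (1+s) ^ h :=
                  mul_le_mul_of_nonneg_left hle (Real.exp_pos _).le
              _ = (1+s)^h * Real.exp (-(t*s)) := by ring
        _ = (1+s)^h * ∫ t in Set.Ioi s⁻¹, Real.exp (-(t*s)) := MeasureTheory.integral_const_mul _ _
        _ = (1+s)^h * (s⁻¹ * Real.exp (-1)) := by rw [hval2]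
    -- combine the pieces
    have hcomb : (1+s⁻¹)^h * ((1/s) ^ (1-h) * G) = (1+s)^h * s⁻¹ * G := by
      have hmul : (1+s⁻¹)^h * s ^ h = (1+s)^h := by
        rw [← Real.mul_rpow (by positivity) hs0.le]
        congr 1
        rw [add_mul, one_mul, inv_mul_cancel₀ hs0.ne', add_comm]
      rw [hpow, show (1+s⁻¹)^h * (s⁻¹ * s ^ h * G) = ((1+s⁻¹)^h * s ^ h) * s⁻¹ * G by ring,
        hmul]
    have hItot : ∫ t in Set.Ioi (0:ℝ), f t ≤ (1+s)^h * s⁻¹ * (G + Real.exp (-1)) := by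
      rw [hsplit]
      calc (∫ t in Set.Ioc (0:ℝ) s⁻¹, f t) + ∫ t in Set.Ioi s⁻¹, f t
          ≤ (1+s⁻¹)^h * ((1/s) ^ (1-h) * G) + (1+s)^h * (s⁻¹ * Real.exp (-1)) :=
            add_le_add hp1 hp2
        _ = (1+s)^h * s⁻¹ * (G + Real.exp (-1)) := by rw [hcomb]; ring
    -- Gamma(2-h) ≤ 1 by convexity
    have hΓ2 : (1-h) * G ≤ 1 := by
      have hconv := Real.convexOn_Gamma.2 (Set.mem_Ioi.mpr one_pos)
        (Set.mem_Ioi.mpr two_pos) hh0 (by linarith : (0:ℝ) ≤ 1-h) (by ring : h + (1-h) = 1)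
      simp only [smul_eq_mul] at hconv
      rw [show h * 1 + (1-h) * 2 = (1-h) + 1 by ring, Real.Gamma_one, Real.Gamma_two,
        Real.Gamma_add_one h1h.ne'] at hconv
      linarith
    have he037 : Real.exp (-1) ≤ 0.37 := by
      rw [Real.exp_neg]
      have h1 := Real.exp_one_gt_d9
      have h2 : (0:ℝ) < Real.exp 1 := Real.exp_pos 1
      rw [inv_le_comm₀ (by positivity) (by norm_num)]
      nlinarith
    have hfin : (1-h) * (G + Real.exp (-1)) ≤ 1.37 := by
      have := Real.exp_pos (-1)
      nlinarith
    show G⁻¹ * ∫ t in Set.Ioi (0:ℝ), f t ≤ _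
    calc G⁻¹ * ∫ t in Set.Ioi (0:ℝ), f t
        ≤ G⁻¹ * ((1+s)^h * s⁻¹ * (G + Real.exp (-1))) :=
          mul_le_mul_of_nonneg_left hItot (by positivity)
      _ ≤ 1.37 / ((1-h) * G) * (s⁻¹ * (1+s)^h) := by
          rw [div_mul_eq_mul_div, le_div_iff₀ (by positivity)]
          rw [show G⁻¹ * ((1+s)^h * s⁻¹ * (G + Real.exp (-1))) * ((1-h) * G)
              = (s⁻¹ * (1+s)^h) * ((1-h) * (G + Real.exp (-1))) * (G⁻¹ * G) by ring,
            inv_mul_cancel₀ hG.ne', mul_one]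
          calc (s⁻¹ * (1+s)^h) * ((1-h) * (G + Real.exp (-1)))
              ≤ (s⁻¹ * (1+s)^h) * 1.37 :=
                mul_le_mul_of_nonneg_left hfin (by positivity)
            _ = 1.37 * (s⁻¹ * (1+s)^h) := by ring
end

section
/- Let h ∈ [0,1) and s > 0. Then ∫₀^∞ e^{-t} t^{-h} ((t+s)/(1+s))^h dt < 1/(1−h) + e^{-1}. In particular the integral is bounded above by 1.37/(1−h). -/
open Real MeasureTheory Set

/-- For h ∈ [0,1) and s > 0, ∫₀^∞ e^{-t} t^{-h} ((t+s)/(1+s))^h dt < 1/(1−h) + e^{-1},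
and in particular the integral is bounded above by 1.37/(1−h). -/
theorem stmt5 (h : ℝ) (hh0 : 0 ≤ h) (hh1 : h < 1) (s : ℝ) (hs : 0 < s) :
    (∫ t in Set.Ioi (0:ℝ), Real.exp (-t) * t ^ (-h) * ((t + s) / (1 + s)) ^ h) <
      1 / (1 - h) + Real.exp (-1) ∧
    (∫ t in Set.Ioi (0:ℝ), Real.exp (-t) * t ^ (-h) * ((t + s) / (1 + s)) ^ h) ≤
      1.37 / (1 - h) := by
  set f : ℝ → ℝ := fun t => Real.exp (-t) * t ^ (-h) * ((t + s) / (1 + s)) ^ h with hf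
  have hs1 : (0:ℝ) < 1 + s := by linarith
  -- continuity / measurability
  have cont : ContinuousOn f (Ioi 0) := by
    apply ContinuousOn.mul
    · apply ContinuousOn.mul
      · exact (Real.continuous_exp.comp continuous_neg).continuousOn
      · exact ContinuousOn.rpow_const continuousOn_id (fun t ht => Or.inl (ne_of_gt ht))
    · apply ContinuousOn.rpow_const
      · exact ((continuous_id.add continuous_const).div_const _).continuousOn
      · exact fun t _ => Or.inr hh0
  have nonneg : ∀ t ∈ Ioi (0:ℝ), 0 ≤ f t := by
    intro t ht
    have := (Real.exp_pos (-t)).le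
    have h1 : (0:ℝ) ≤ t ^ (-h) := Real.rpow_nonneg (le_of_lt ht) _
    have h2 : (0:ℝ) ≤ ((t + s) / (1 + s)) ^ h :=
      Real.rpow_nonneg (div_nonneg (by simp at ht; linarith) hs1.le) _
    positivity
  -- bound on (0,1]
  have bound1 : ∀ t ∈ Ioc (0:ℝ) 1, f t ≤ t ^ (-h) := by
    intro t ht
    have hX : ((t + s) / (1 + s)) ^ h ≤ 1 :=
      Real.rpow_le_one (div_nonneg (by linarith [ht.1]) hs1.le)
        ((div_le_one hs1).mpr (by linarith [ht.2])) hh0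
    have hE : Real.exp (-t) ≤ 1 := Real.exp_le_one_iff.mpr (by linarith [ht.1])
    have h1 : (0:ℝ) ≤ t ^ (-h) := Real.rpow_nonneg ht.1.le _
    have h2 : (0:ℝ) ≤ ((t + s) / (1 + s)) ^ h :=
      Real.rpow_nonneg (div_nonneg (by linarith [ht.1]) hs1.le) _
    calc Real.exp (-t) * t ^ (-h) * ((t + s) / (1 + s)) ^ h
        ≤ 1 * t ^ (-h) * 1 := by
          apply mul_le_mul _ hX h2 (by positivity)
          exact mul_le_mul_of_nonneg_right hE h1
      _ = t ^ (-h) := by ring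
  -- bound on (1/2, 1]
  have bound2 : ∀ t ∈ Ioc (1/2:ℝ) 1, f t ≤ Real.exp (-(1/2)) * t ^ (-h) := by
    intro t ht
    have ht0 : (0:ℝ) < t := by linarith [ht.1]
    have hX : ((t + s) / (1 + s)) ^ h ≤ 1 :=
      Real.rpow_le_one (div_nonneg (by linarith) hs1.le)
        ((div_le_one hs1).mpr (by linarith [ht.2])) hh0
    have hE : Real.exp (-t) ≤ Real.exp (-(1/2)) := Real.exp_le_exp.mpr (by linarith [ht.1])
    have h1 : (0:ℝ) ≤ t ^ (-h) := Real.rpow_nonneg ht0.le _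
    have h2 : (0:ℝ) ≤ ((t + s) / (1 + s)) ^ h :=
      Real.rpow_nonneg (div_nonneg (by linarith) hs1.le) _
    calc Real.exp (-t) * t ^ (-h) * ((t + s) / (1 + s)) ^ h
        ≤ (Real.exp (-(1/2)) * t ^ (-h)) * 1 := by
          apply mul_le_mul _ hX h2 (by positivity)
          exact mul_le_mul_of_nonneg_right hE h1
      _ = Real.exp (-(1/2)) * t ^ (-h) := by ring
  -- bound on (1, ∞)
  have bound3 : ∀ t ∈ Ioi (1:ℝ), f t ≤ Real.exp (-t) := by
    intro t ht
    simp only [mem_Ioi] at ht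
    have ht0 : (0:ℝ) < t := by linarith
    have hbase : (t + s) / (1 + s) ≤ t := by
      rw [div_le_iff₀ hs1]; nlinarith
    have hX : ((t + s) / (1 + s)) ^ h ≤ t ^ h :=
      Real.rpow_le_rpow (div_nonneg (by linarith) hs1.le) hbase hh0
    have key : t ^ (-h) * ((t + s) / (1 + s)) ^ h ≤ 1 := by
      have : t ^ (-h) * ((t + s) / (1 + s)) ^ h ≤ t ^ (-h) * t ^ h :=
        mul_le_mul_of_nonneg_left hX (Real.rpow_nonneg ht0.le _)
      rw [← Real.rpow_add ht0, neg_add_cancel, Real.rpow_zero] at this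
      exact this
    calc Real.exp (-t) * t ^ (-h) * ((t + s) / (1 + s)) ^ h
        = Real.exp (-t) * (t ^ (-h) * ((t + s) / (1 + s)) ^ h) := by ring
      _ ≤ Real.exp (-t) * 1 := mul_le_mul_of_nonneg_left key (Real.exp_pos _).le
      _ = Real.exp (-t) := by ring
  -- integrability of t^(-h)
  have intRpow : ∀ a b : ℝ, 0 ≤ a → a ≤ b → IntegrableOn (fun t : ℝ => t ^ (-h)) (Ioc a b) := by
    intro a b _ hab
    have := intervalIntegral.intervalIntegrable_rpow' (a:=a) (b:=b) (r := -h) (by linarith)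
    rwa [intervalIntegrable_iff_integrableOn_Ioc_of_le hab] at this
  have intExp : IntegrableOn (fun t : ℝ => Real.exp (-t)) (Ioi (1:ℝ)) := by
    simpa using exp_neg_integrableOn_Ioi 1 (b:=1) one_pos
  -- integrability of f on pieces
  have meas : ∀ u : Set ℝ, MeasurableSet u → u ⊆ Ioi 0 →
      AEStronglyMeasurable f (volume.restrict u) := by
    intro u hu hsub
    exact (cont.mono hsub).aestronglyMeasurable hu
  have intF1 : IntegrableOn f (Ioc (0:ℝ) 1) := by
    apply Integrable.mono' (intRpow 0 1 le_rfl (by norm_num))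
      (meas _ measurableSet_Ioc Ioc_subset_Ioi_self)
    filter_upwards [ae_restrict_mem measurableSet_Ioc] with t ht
    rw [Real.norm_eq_abs, abs_of_nonneg (nonneg t ht.1)]
    exact bound1 t ht
  have intF2 : IntegrableOn f (Ioi (1:ℝ)) := by
    apply Integrable.mono' intExp
      (meas _ measurableSet_Ioi (Ioi_subset_Ioi (by norm_num)))
    filter_upwards [ae_restrict_mem measurableSet_Ioi] with t ht
    rw [Real.norm_eq_abs, abs_of_nonneg (nonneg t (by simp at ht ⊢; linarith))]
    exact bound3 t ht
  have intF1a : IntegrableOn f (Ioc (0:ℝ) (1/2)) :=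
    intF1.mono_set (Ioc_subset_Ioc le_rfl (by norm_num))
  have intF1b : IntegrableOn f (Ioc (1/2:ℝ) 1) :=
    intF1.mono_set (Ioc_subset_Ioc (by norm_num) le_rfl)
  -- split the integral
  have split1 : (∫ t in Ioi (0:ℝ), f t) = (∫ t in Ioc (0:ℝ) 1, f t) + ∫ t in Ioi (1:ℝ), f t := by
    rw [← setIntegral_union (Ioc_disjoint_Ioi le_rfl) measurableSet_Ioi intF1 intF2,
      Ioc_union_Ioi_eq_Ioi zero_le_one]
  have split2 : (∫ t in Ioc (0:ℝ) 1, f t) =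
      (∫ t in Ioc (0:ℝ) (1/2), f t) + ∫ t in Ioc (1/2:ℝ) 1, f t := by
    rw [← setIntegral_union (Ioc_disjoint_Ioc_of_le le_rfl) measurableSet_Ioc intF1a intF1b,
      Ioc_union_Ioc_eq_Ioc (by norm_num) (by norm_num)]
  -- values and bounds of reference integrals
  have valV : (∫ t in Ioc (0:ℝ) 1, t ^ (-h)) = 1 / (1 - h) := by
    rw [← intervalIntegral.integral_of_le (by norm_num : (0:ℝ) ≤ 1),
      integral_rpow (Or.inl (by linarith)), Real.one_rpow, Real.zero_rpow (by linarith)]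
    ring
  have splitV : (∫ t in Ioc (0:ℝ) 1, t ^ (-h)) =
      (∫ t in Ioc (0:ℝ) (1/2), t ^ (-h)) + ∫ t in Ioc (1/2:ℝ) 1, t ^ (-h) := by
    rw [← setIntegral_union (Ioc_disjoint_Ioc_of_le le_rfl) measurableSet_Ioc
      (intRpow 0 (1/2) le_rfl (by norm_num)) (intRpow (1/2) 1 (by norm_num) (by norm_num)),
      Ioc_union_Ioc_eq_Ioc (by norm_num) (by norm_num)]
  have Dge : (1/2:ℝ) ≤ ∫ t in Ioc (1/2:ℝ) 1, t ^ (-h) := by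
    have : (∫ t in Ioc (1/2:ℝ) 1, (1:ℝ)) ≤ ∫ t in Ioc (1/2:ℝ) 1, t ^ (-h) := by
      apply setIntegral_mono_on (by simp) (intRpow (1/2) 1 (by norm_num) (by norm_num))
        measurableSet_Ioc
      intro t ht
      calc (1:ℝ) = t ^ (0:ℝ) := (Real.rpow_zero t).symm
        _ ≤ t ^ (-h) := Real.rpow_le_rpow_of_exponent_ge (by linarith [ht.1]) ht.2 (by linarith)
    simpa [Real.volume_Ioc] using this.trans_eq' (by
      simp [Real.volume_Ioc]
      norm_num)
  -- bound the three pieces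
  have hA : (∫ t in Ioc (0:ℝ) (1/2), f t) ≤ ∫ t in Ioc (0:ℝ) (1/2), t ^ (-h) := by
    apply setIntegral_mono_on intF1a (intRpow 0 (1/2) le_rfl (by norm_num)) measurableSet_Ioc
    intro t ht
    exact bound1 t ⟨ht.1, by linarith [ht.2]⟩
  have hB : (∫ t in Ioc (1/2:ℝ) 1, f t) ≤
      Real.exp (-(1/2)) * ∫ t in Ioc (1/2:ℝ) 1, t ^ (-h) := by
    rw [← integral_const_mul]
    apply setIntegral_mono_on intF1b
      ((intRpow (1/2) 1 (by norm_num) (by norm_num)).const_mul _) measurableSet_Ioc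
    exact bound2
  have hC : (∫ t in Ioi (1:ℝ), f t) ≤ Real.exp (-1) := by
    rw [← integral_exp_neg_Ioi 1]
    exact setIntegral_mono_on intF2 intExp measurableSet_Ioi bound3
  -- combine
  set D := ∫ t in Ioc (1/2:ℝ) 1, t ^ (-h) with hD
  have hexp : Real.exp (-(1/2)) < 1 := Real.exp_lt_one_iff.mpr (by norm_num)
  have hexp0 : 0 < Real.exp (-(1/2)) := Real.exp_pos _
  have key : (∫ t in Ioi (0:ℝ), f t) ≤ 1 / (1 - h) + Real.exp (-1) - (1 - Real.exp (-(1/2))) * D := by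
    rw [split1, split2]
    have hAD : (∫ t in Ioc (0:ℝ) (1/2), t ^ (-h)) = 1 / (1 - h) - D := by
      rw [← valV, splitV]; ring
    nlinarith [hA, hB, hC]
  have gap : (0:ℝ) < (1 - Real.exp (-(1/2))) * D := by nlinarith
  constructor
  · linarith
  · have he : Real.exp (-1) ≤ 0.37 := by
      rw [Real.exp_neg]
      rw [inv_le_comm₀ (Real.exp_pos 1) (by norm_num)]
      calc (0.37:ℝ)⁻¹ ≤ 2.71 := by norm_num
        _ ≤ Real.exp 1 := by linarith [Real.exp_one_gt_d9]
    have h37 : (0.37:ℝ) ≤ 0.37 / (1 - h) := by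
      rw [le_div_iff₀ (by linarith)]; nlinarith
    have : (1:ℝ) / (1-h) + Real.exp (-1) ≤ 1.37 / (1-h) := by
      have : (1.37:ℝ)/(1-h) = 1/(1-h) + 0.37/(1-h) := by ring
      rw [this]; linarith
    linarith
end

section
/- Let c, d, k be real with c > −1 and k < 0, and let f : (0,∞) → ℝ be continuous and strictly positive with lim_{r→0⁺} r^{-c} f(r) ∈ (0,∞) and lim_{r→∞} r^{-d} f(r) ∈ (0,∞). Then there exist constants C₁, C₂ > 0 such that for all r > 0: C₁ · r^{1+c}(1+r)^{-1-c} ≤ ∫₀^r f(s)e^{ks} ds ≤ C₂ · r^{1+c}(1+r)^{-1-c}. -/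
open Real MeasureTheory Filter Topology

/-- Integral bracketing lemma, item (a): if c > −1, k < 0 and f is continuous,
strictly positive, with r^{-c}f(r) and r^{-d}f(r) tending to finite positive limits
at 0⁺ and ∞ respectively, then ∫₀^r f(s)e^{ks} ds ≃ r^{1+c}(1+r)^{-1-c}. -/
theorem stmt6 (c d k : ℝ) (hc : -1 < c) (hk : k < 0)
    (f : ℝ → ℝ) (hfc : ContinuousOn f (Set.Ioi 0)) (hfpos : ∀ r > (0:ℝ), 0 < f r)
    (L₀ Linf : ℝ) (hL₀ : 0 < L₀) (hLinf : 0 < Linf)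
    (h0 : Tendsto (fun r : ℝ => r ^ (-c) * f r) (nhdsWithin 0 (Set.Ioi 0)) (nhds L₀))
    (hi : Tendsto (fun r : ℝ => r ^ (-d) * f r) atTop (nhds Linf)) :
    ∃ C₁ > (0:ℝ), ∃ C₂ > (0:ℝ), ∀ r > (0:ℝ),
      C₁ * (r ^ (1 + c) * (1 + r) ^ (-1 - c)) ≤
        (∫ s in Set.Ioc (0:ℝ) r, f s * Real.exp (k * s)) ∧
      (∫ s in Set.Ioc (0:ℝ) r, f s * Real.exp (k * s)) ≤
        C₂ * (r ^ (1 + c) * (1 + r) ^ (-1 - c)) := by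
  have hc1 : (0:ℝ) < 1 + c := by linarith
  -- step 1 : bounds near zero
  obtain ⟨δ, hδ0, hδ⟩ : ∃ δ > (0:ℝ), ∀ s, 0 < s → s < δ →
      L₀/2 * s ^ c ≤ f s ∧ f s ≤ 2*L₀ * s ^ c := by
    have h1 : ∀ᶠ s in 𝓝[>] (0:ℝ), s ^ (-c) * f s ∈ Set.Ioo (L₀/2) (2*L₀) :=
      h0.eventually (Ioo_mem_nhds (by linarith) (by linarith))
    rw [eventually_nhdsWithin_iff, Metric.eventually_nhds_iff] at h1
    obtain ⟨δ, hδ0, h1⟩ := h1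
    refine ⟨δ, hδ0, fun s hs1 hs2 => ?_⟩
    have h2 := h1 (show dist s 0 < δ by
      rw [Real.dist_eq, sub_zero, abs_of_pos hs1]; exact hs2) hs1
    have hsc : (0:ℝ) < s ^ c := Real.rpow_pos_of_pos hs1 c
    have key : s ^ c * (s ^ (-c) * f s) = f s := by
      rw [← mul_assoc, ← Real.rpow_add hs1]; simp
    obtain ⟨hlo, hhi⟩ := h2
    constructor
    · nlinarith
    · nlinarith
  -- step 2 : tail bound
  obtain ⟨M, hM1, hM⟩ : ∃ M, 1 ≤ M ∧ ∀ s, M ≤ s →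
      f s * Real.exp (k * s) ≤ 2*Linf * Real.exp (k/2 * s) := by
    have h1 : ∀ᶠ s in atTop, s ^ (-d) * f s ∈ Set.Ioo (Linf/2) (2*Linf) :=
      hi.eventually (Ioo_mem_nhds (by linarith) (by linarith))
    have h2 : Tendsto (fun s : ℝ => s ^ d * Real.exp (-(-(k/2)) * s)) atTop (nhds 0) :=
      tendsto_rpow_mul_exp_neg_mul_atTop_nhds_zero d (-(k/2)) (by linarith)
    have h3 : ∀ᶠ s : ℝ in atTop, s ^ d * Real.exp (k/2 * s) ≤ 1 := by
      have := h2.eventually (eventually_le_nhds (show (0:ℝ) < 1 by norm_num))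
      simpa using this
    have h4 : ∀ᶠ s : ℝ in atTop, (1:ℝ) ≤ s := eventually_ge_atTop 1
    obtain ⟨M, hM⟩ := (h1.and (h3.and h4)).exists_forall_of_atTop
    refine ⟨max M 1, le_max_right _ _, fun s hs => ?_⟩
    obtain ⟨⟨hlo, hhi⟩, hexp, hs1⟩ := hM s (le_trans (le_max_left _ _) hs)
    have hs0 : (0:ℝ) < s := lt_of_lt_of_le one_pos hs1
    have hsd : (0:ℝ) < s ^ d := Real.rpow_pos_of_pos hs0 d
    have key : s ^ d * (s ^ (-d) * f s) = f s := by
      rw [← mul_assoc, ← Real.rpow_add hs0]; simp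
    have hf2 : f s ≤ 2*Linf * s ^ d := by nlinarith
    have hexpos : (0:ℝ) < Real.exp (k/2*s) := Real.exp_pos _
    calc f s * Real.exp (k * s) ≤ (2*Linf * s ^ d) * Real.exp (k * s) := by
          apply mul_le_mul_of_nonneg_right hf2 (Real.exp_pos _).le
      _ = 2*Linf * (s ^ d * Real.exp (k/2*s)) * Real.exp (k/2*s) := by
          rw [show k * s = k/2*s + k/2*s by ring, Real.exp_add]; ring
      _ ≤ 2*Linf * 1 * Real.exp (k/2*s) := by
          apply mul_le_mul_of_nonneg_right _ hexpos.le
          apply mul_le_mul_of_nonneg_left hexp (by positivity)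
      _ = 2*Linf * Real.exp (k/2 * s) := by ring
  -- step 3 : setup
  set δ₁ := min δ 1 / 2 with hδ₁def
  have hδ₁0 : 0 < δ₁ := by positivity
  have hδ₁δ : δ₁ < δ := by
    have := min_le_left δ 1; simp only [hδ₁def]; linarith
  have hδ₁1 : δ₁ ≤ 1 := by
    have := min_le_right δ 1; simp only [hδ₁def]; linarith
  set g : ℝ → ℝ := fun s => f s * Real.exp (k * s) with hgdef
  have hgc : ContinuousOn g (Set.Ioi 0) :=
    hfc.mul (Real.continuous_exp.comp (continuous_const.mul continuous_id)).continuousOn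
  -- integrability near 0
  have hint0 : IntegrableOn g (Set.Ioc 0 δ₁) := by
    have hbound : IntegrableOn (fun s : ℝ => 2*L₀ * s ^ c) (Set.Ioc 0 δ₁) := by
      have : IntervalIntegrable (fun s : ℝ => s ^ c) volume 0 δ₁ :=
        intervalIntegral.intervalIntegrable_rpow' hc
      rw [intervalIntegrable_iff_integrableOn_Ioc_of_le hδ₁0.le] at this
      exact this.const_mul _
    apply Integrable.mono' hbound
    · exact (hgc.mono (Set.Ioc_subset_Ioi_self)).aestronglyMeasurable measurableSet_Ioc
    · filter_upwards [ae_restrict_mem measurableSet_Ioc] with s hs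
      have hs0 : 0 < s := hs.1
      have hup := (hδ s hs0 (lt_of_le_of_lt hs.2 hδ₁δ)).2
      have h1 : Real.exp (k*s) ≤ 1 := Real.exp_le_one_iff.mpr (by nlinarith)
      have h2 : 0 < f s := hfpos s hs0
      rw [Real.norm_eq_abs, abs_of_pos (by positivity)]
      calc f s * Real.exp (k*s) ≤ f s * 1 := by nlinarith [Real.exp_pos (k*s)]
        _ = f s := by ring
        _ ≤ 2*L₀*s^c := hup
  -- integrability mid
  have hintmid : IntegrableOn g (Set.Icc δ₁ M) := by
    apply ContinuousOn.integrableOn_Icc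
    exact hgc.mono (fun x hx => lt_of_lt_of_le hδ₁0 hx.1)
  -- integrability tail
  have hinttail : IntegrableOn g (Set.Ioi M) := by
    have hbound : IntegrableOn (fun s : ℝ => 2*Linf * Real.exp (-(-(k/2)) * s)) (Set.Ioi M) :=
      (exp_neg_integrableOn_Ioi M (by linarith : (0:ℝ) < -(k/2))).const_mul _
    apply Integrable.mono' hbound
    · exact (hgc.mono (fun x hx => lt_of_lt_of_le (by linarith) (le_of_lt hx))).aestronglyMeasurable measurableSet_Ioi
    · filter_upwards [ae_restrict_mem measurableSet_Ioi] with s hs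
      have hs0 : 0 < s := by have := hs; simp only [Set.mem_Ioi] at this; linarith
      have hf := hfpos s hs0
      rw [Real.norm_eq_abs, abs_of_pos (by positivity)]
      simpa using hM s (le_of_lt hs)
  -- combined integrability
  have hint : IntegrableOn g (Set.Ioi 0) := by
    have : Set.Ioi (0:ℝ) ⊆ Set.Ioc 0 δ₁ ∪ (Set.Icc δ₁ M ∪ Set.Ioi M) := by
      intro x hx
      simp only [Set.mem_Ioi] at hx
      by_cases h1 : x ≤ δ₁
      · exact Or.inl ⟨hx, h1⟩
      · push_neg at h1
        by_cases h2 : x ≤ M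
        · exact Or.inr (Or.inl ⟨h1.le, h2⟩)
        · exact Or.inr (Or.inr (by push_neg at h2; exact h2))
    exact ((hint0.union (hintmid.union hinttail)).mono_set this)
  have hgnn : 0 ≤ᵐ[volume.restrict (Set.Ioi (0:ℝ))] g := by
    filter_upwards [ae_restrict_mem measurableSet_Ioi] with s hs
    have := hfpos s hs
    positivity
  -- rpow integral value
  have hrpowint : ∀ r : ℝ, 0 < r → (∫ s in Set.Ioc (0:ℝ) r, s ^ c) = r ^ (1+c) / (1+c) := by
    intro r hr
    rw [← intervalIntegral.integral_of_le hr.le, integral_rpow (Or.inl hc)]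
    rw [Real.zero_rpow (by linarith : c + 1 ≠ 0)]
    rw [show c + 1 = 1 + c by ring]
    ring
  -- lower bound for small r
  have hlow : ∀ r, 0 < r → r ≤ δ₁ →
      (L₀/2 * Real.exp (k*δ₁) / (1+c)) * r ^ (1+c) ≤ (∫ s in Set.Ioc (0:ℝ) r, g s) := by
    intro r hr hrδ
    have hInt1 : IntegrableOn (fun s : ℝ => (L₀/2 * Real.exp (k*δ₁)) * s ^ c) (Set.Ioc 0 r) := by
      have : IntervalIntegrable (fun s : ℝ => s ^ c) volume 0 r :=
        intervalIntegral.intervalIntegrable_rpow' hc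
      rw [intervalIntegrable_iff_integrableOn_Ioc_of_le hr.le] at this
      exact this.const_mul _
    have hInt2 : IntegrableOn g (Set.Ioc 0 r) := hint.mono_set Set.Ioc_subset_Ioi_self
    have hle : ∀ s ∈ Set.Ioc (0:ℝ) r, (L₀/2 * Real.exp (k*δ₁)) * s ^ c ≤ g s := by
      intro s hs
      have hs0 : 0 < s := hs.1
      have hlo := (hδ s hs0 (by linarith [hs.2] : s < δ)).1
      have hexp : Real.exp (k*δ₁) ≤ Real.exp (k*s) :=
        Real.exp_le_exp.mpr (by nlinarith [hs.2])
      have hsc : (0:ℝ) < s ^ c := Real.rpow_pos_of_pos hs0 c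
      calc (L₀/2 * Real.exp (k*δ₁)) * s^c ≤ (L₀/2 * s^c) * Real.exp (k*s) := by
            nlinarith [mul_le_mul_of_nonneg_left hexp
              (show (0:ℝ) ≤ L₀/2*s^c by positivity)]
        _ ≤ f s * Real.exp (k*s) := mul_le_mul_of_nonneg_right hlo (Real.exp_pos _).le
    have hmain := setIntegral_mono_on hInt1 hInt2 measurableSet_Ioc hle
    rw [MeasureTheory.integral_const_mul, hrpowint r hr] at hmain
    have heq : (L₀/2*Real.exp (k*δ₁)/(1+c)) * r^(1+c)
        = L₀/2*Real.exp (k*δ₁) * (r^(1+c)/(1+c)) := by ring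
    linarith
  -- upper bound for small r
  have hup : ∀ r, 0 < r → r ≤ δ₁ → (∫ s in Set.Ioc (0:ℝ) r, g s) ≤ (2*L₀/(1+c)) * r ^ (1+c) := by
    intro r hr hrδ
    have hInt1 : IntegrableOn (fun s : ℝ => (2*L₀) * s ^ c) (Set.Ioc 0 r) := by
      have : IntervalIntegrable (fun s : ℝ => s ^ c) volume 0 r :=
        intervalIntegral.intervalIntegrable_rpow' hc
      rw [intervalIntegrable_iff_integrableOn_Ioc_of_le hr.le] at this
      exact this.const_mul _
    have hInt2 : IntegrableOn g (Set.Ioc 0 r) := hint.mono_set Set.Ioc_subset_Ioi_self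
    have hle : ∀ s ∈ Set.Ioc (0:ℝ) r, g s ≤ (2*L₀) * s ^ c := by
      intro s hs
      have hs0 : 0 < s := hs.1
      have hhi := (hδ s hs0 (by linarith [hs.2] : s < δ)).2
      have h1 : Real.exp (k*s) ≤ 1 := Real.exp_le_one_iff.mpr (by nlinarith)
      have h2 : 0 < f s := hfpos s hs0
      calc f s * Real.exp (k*s) ≤ f s * 1 := by nlinarith [Real.exp_pos (k*s)]
        _ = f s := by ring
        _ ≤ 2*L₀*s^c := hhi
    have hmain := setIntegral_mono_on hInt2 hInt1 measurableSet_Ioc hle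
    rw [MeasureTheory.integral_const_mul, hrpowint r hr] at hmain
    have heq : (2*L₀/(1+c)) * r^(1+c) = 2*L₀ * (r^(1+c)/(1+c)) := by ring
    linarith
  -- monotonicity
  have hmono : ∀ r₁ r₂ : ℝ, 0 < r₁ → r₁ ≤ r₂ → (∫ s in Set.Ioc (0:ℝ) r₁, g s) ≤ ∫ s in Set.Ioc (0:ℝ) r₂, g s := by
    intro r₁ r₂ h1 h2
    apply setIntegral_mono_set (hint.mono_set Set.Ioc_subset_Ioi_self)
    · filter_upwards [ae_restrict_mem measurableSet_Ioc] with s hs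
      have := hfpos s hs.1
      positivity
    · exact HasSubset.Subset.eventuallyLE (Set.Ioc_subset_Ioc_right h2)
  have hFtop : ∀ r, 0 < r → (∫ s in Set.Ioc (0:ℝ) r, g s) ≤ ∫ s in Set.Ioi (0:ℝ), g s := by
    intro r hr
    apply setIntegral_mono_set hint hgnn
    exact HasSubset.Subset.eventuallyLE Set.Ioc_subset_Ioi_self
  -- comparator bounds
  have hφle : ∀ r : ℝ, 0 < r → r ^ (1+c) * (1+r) ^ (-1-c) ≤ r ^ (1+c) := by
    intro r hr
    have h1 : (1+r) ^ (-1-c) ≤ 1 :=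
      Real.rpow_le_one_of_one_le_of_nonpos (by linarith) (by linarith)
    exact mul_le_of_le_one_right (Real.rpow_nonneg hr.le _) h1
  have hφnn : ∀ r : ℝ, 0 < r → 0 ≤ r ^ (1+c) * (1+r) ^ (-1-c) := by
    intro r hr
    have := Real.rpow_nonneg hr.le (1+c)
    have : (0:ℝ) ≤ (1+r) ^ (-1-c) := Real.rpow_nonneg (by linarith) _
    positivity
  have hφ1 : ∀ r : ℝ, 0 < r → r ^ (1+c) * (1+r) ^ (-1-c) ≤ 1 := by
    intro r hr
    have h1 : r^(1+c) ≤ (1+r)^(1+c) := Real.rpow_le_rpow hr.le (by linarith) hc1.le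
    have h2 : (0:ℝ) < (1+r)^(-1-c) := Real.rpow_pos_of_pos (by linarith) _
    calc r^(1+c)*(1+r)^(-1-c) ≤ (1+r)^(1+c)*(1+r)^(-1-c) :=
          mul_le_mul_of_nonneg_right h1 h2.le
      _ = (1+r)^((1+c)+(-1-c)) := (Real.rpow_add (by linarith) _ _).symm
      _ = 1 := by rw [show (1+c)+(-1-c) = 0 by ring, Real.rpow_zero]
  have hφsmall : ∀ r : ℝ, 0 < r → r ≤ 1 →
      (2:ℝ)^(-1-c) * r^(1+c) ≤ r^(1+c) * (1+r)^(-1-c) := by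
    intro r hr hr1
    have h1 : (2:ℝ)^(-1-c) ≤ (1+r)^(-1-c) :=
      Real.rpow_le_rpow_of_nonpos (by linarith) (by linarith) (by linarith)
    calc (2:ℝ)^(-1-c)*r^(1+c) ≤ (1+r)^(-1-c)*r^(1+c) :=
          mul_le_mul_of_nonneg_right h1 (Real.rpow_nonneg hr.le _)
      _ = r^(1+c)*(1+r)^(-1-c) := mul_comm _ _
  have hφbig : ∀ r : ℝ, δ₁ ≤ r →
      (δ₁/(1+δ₁))^(1+c) ≤ r^(1+c) * (1+r)^(-1-c) := by
    intro r hr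
    have hr0 : 0 < r := lt_of_lt_of_le hδ₁0 hr
    have h1r : (0:ℝ) < 1+r := by linarith
    have hdiv : δ₁/(1+δ₁) ≤ r/(1+r) := by
      rw [div_le_div_iff₀ (by linarith) h1r]; nlinarith
    have h2 := Real.rpow_le_rpow (by positivity) hdiv hc1.le
    have heq : (r/(1+r))^(1+c) = r^(1+c) * (1+r)^(-1-c) := by
      rw [Real.div_rpow hr0.le h1r.le, show (-1-c) = -(1+c) by ring,
        Real.rpow_neg h1r.le, div_eq_mul_inv]
    linarith [heq ▸ h2]
  -- assembly
  have hA : (0:ℝ) < L₀/2 * Real.exp (k*δ₁) / (1+c) := by positivity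
  set A := L₀/2 * Real.exp (k*δ₁) / (1+c) with hAdef
  set Finf := ∫ s in Set.Ioi (0:ℝ), g s with hFinfdef
  have hδpow : (0:ℝ) < δ₁^(1+c) := Real.rpow_pos_of_pos hδ₁0 _
  have hδpow1 : δ₁^(1+c) ≤ 1 := Real.rpow_le_one hδ₁0.le hδ₁1 hc1.le
  have hFδ : A * δ₁^(1+c) ≤ ∫ s in Set.Ioc (0:ℝ) δ₁, g s := hlow δ₁ hδ₁0 le_rfl
  have hFinfpos : 0 < Finf := lt_of_lt_of_le (by positivity) (hFδ.trans (hFtop δ₁ hδ₁0))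
  have hm : (0:ℝ) < (δ₁/(1+δ₁))^(1+c) := Real.rpow_pos_of_pos (by positivity) _
  have h2pow : (0:ℝ) < (2:ℝ)^(1+c) := Real.rpow_pos_of_pos two_pos _
  have h2prod : (2:ℝ)^(1+c) * (2:ℝ)^(-1-c) = 1 := by
    rw [← Real.rpow_add two_pos, show (1+c)+(-1-c) = 0 by ring, Real.rpow_zero]
  refine ⟨A * δ₁^(1+c), by positivity,
    max ((2*L₀/(1+c)) * 2^(1+c)) (Finf / (δ₁/(1+δ₁))^(1+c)),
    lt_of_lt_of_le (by positivity) (le_max_left _ _), fun r hr => ?_⟩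
  have hφnn' := hφnn r hr
  constructor
  · by_cases hcase : r ≤ δ₁
    · have h1 := hlow r hr hcase
      have h2 := hφle r hr
      have s1 : A*δ₁^(1+c) ≤ A := by nlinarith
      have s2 : A*δ₁^(1+c)*(r^(1+c)*(1+r)^(-1-c)) ≤ A*(r^(1+c)) :=
        mul_le_mul s1 h2 hφnn' hA.le
      linarith
    · push_neg at hcase
      have h1 := hmono δ₁ r hδ₁0 hcase.le
      have h3 := hφ1 r hr
      have s2 : A*δ₁^(1+c)*(r^(1+c)*(1+r)^(-1-c)) ≤ A*δ₁^(1+c)*1 :=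
        mul_le_mul_of_nonneg_left h3 (by positivity)
      have := hFδ
      linarith
  · by_cases hcase : r ≤ δ₁
    · have h1 := hup r hr hcase
      have h2 := hφsmall r hr (hcase.trans hδ₁1)
      have h3 : (0:ℝ) < r^(1+c) := Real.rpow_pos_of_pos hr _
      have h4 : (2*L₀/(1+c)) * 2^(1+c) ≤
          max ((2*L₀/(1+c)) * 2^(1+c)) (Finf / (δ₁/(1+δ₁))^(1+c)) := le_max_left _ _
      have hB : (0:ℝ) < 2*L₀/(1+c) := by positivity
      have s1 : (2*L₀/(1+c)) * r^(1+c)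
          = ((2*L₀/(1+c)) * 2^(1+c)) * (2^(-1-c) * r^(1+c)) := by
        rw [show ((2*L₀/(1+c)) * 2^(1+c)) * ((2:ℝ)^(-1-c) * r^(1+c))
          = (2*L₀/(1+c)) * ((2:ℝ)^(1+c) * 2^(-1-c)) * r^(1+c) by ring, h2prod]
        ring
      have s2 : ((2*L₀/(1+c)) * 2^(1+c)) * (2^(-1-c) * r^(1+c))
          ≤ ((2*L₀/(1+c)) * 2^(1+c)) * (r^(1+c)*(1+r)^(-1-c)) :=
        mul_le_mul_of_nonneg_left h2 (by positivity)
      have s3 : ((2*L₀/(1+c)) * 2^(1+c)) * (r^(1+c)*(1+r)^(-1-c))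
          ≤ (max ((2*L₀/(1+c)) * 2^(1+c)) (Finf / (δ₁/(1+δ₁))^(1+c))) * (r^(1+c)*(1+r)^(-1-c)) :=
        mul_le_mul_of_nonneg_right h4 hφnn'
      linarith
    · push_neg at hcase
      have h1 := hFtop r hr
      have h2 := hφbig r hcase.le
      have h4 : Finf / (δ₁/(1+δ₁))^(1+c) ≤
          max ((2*L₀/(1+c)) * 2^(1+c)) (Finf / (δ₁/(1+δ₁))^(1+c)) := le_max_right _ _
      have h5 : Finf ≤ (Finf / (δ₁/(1+δ₁))^(1+c)) * (r^(1+c)*(1+r)^(-1-c)) := by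
        rw [div_mul_eq_mul_div, le_div_iff₀ hm]
        exact mul_le_mul_of_nonneg_left h2 hFinfpos.le
      have s3 : (Finf / (δ₁/(1+δ₁))^(1+c)) * (r^(1+c)*(1+r)^(-1-c))
          ≤ (max ((2*L₀/(1+c)) * 2^(1+c)) (Finf / (δ₁/(1+δ₁))^(1+c))) * (r^(1+c)*(1+r)^(-1-c)) :=
        mul_le_mul_of_nonneg_right h4 hφnn'
      linarith
end

section
/- Let c, d, k be real with c > −1 and k < 0, and let f : (0,∞) → ℝ be continuous and strictly positive with lim_{r→0⁺} r^{-c} f(r) ∈ (0,∞) and lim_{r→∞} r^{-d} f(r) ∈ (0,∞). Then there exist constants C₁, C₂ > 0 such that for all r > 0: C₁ · (1+r)^d e^{kr} ≤ ∫_r^∞ f(s)e^{ks} ds ≤ C₂ · (1+r)^d e^{kr}. -/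
open Real MeasureTheory Filter Topology


lemma expIntOn (a r : ℝ) (ha : a < 0) :
    IntegrableOn (fun s : ℝ => Real.exp (a * s)) (Set.Ioi r) := by
  have h := exp_neg_integrableOn_Ioi r (b := -a) (by linarith)
  simpa using h

lemma expInt (a r : ℝ) (ha : a < 0) :
    ∫ s in Set.Ioi r, Real.exp (a * s) = Real.exp (a * r) / (-a) := by
  have ha' : a ≠ 0 := ne_of_lt ha
  have hderiv : ∀ x ∈ Set.Ici r, HasDerivAt (fun s => Real.exp (a * s) / a)
      (Real.exp (a * x)) x := by
    intro x _
    have h1 : HasDerivAt (fun s : ℝ => a * s) a x := by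
      simpa using (hasDerivAt_id x).const_mul a
    have h2 := (Real.hasDerivAt_exp (a * x)).comp x h1
    have h3 := h2.div_const a
    simpa [mul_div_assoc, mul_div_cancel_right₀ _ ha'] using h3
  have htend : Tendsto (fun s => Real.exp (a * s) / a) atTop (𝓝 0) := by
    have : Tendsto (fun s : ℝ => a * s) atTop atBot :=
      tendsto_id.const_mul_atTop_of_neg ha
    have := Real.tendsto_exp_atBot.comp this
    simpa using this.div_const a
  have := integral_Ioi_of_hasDerivAt_of_tendsto' hderiv (expIntOn a r ha) htend
  rw [this]
  rw [eq_div_iff (by linarith : -a ≠ 0)]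
  field_simp
  ring

lemma aux_bound (d b : ℝ) (hb : 0 < b) :
    ∃ C > (0:ℝ), ∀ t ≥ (0:ℝ), (1 + t) ^ d ≤ C * Real.exp (b * t) := by
  have h0 : Tendsto (fun x : ℝ => x ^ d * Real.exp (-b * x)) atTop (𝓝 0) :=
    tendsto_rpow_mul_exp_neg_mul_atTop_nhds_zero d b hb
  have h1 : Tendsto (fun t : ℝ => (1 + t) ^ d * Real.exp (-b * (1 + t))) atTop (𝓝 0) :=
    h0.comp (tendsto_atTop_add_const_left _ 1 tendsto_id)
  have h2 : ∀ᶠ t in atTop, (1 + t) ^ d * Real.exp (-b * (1 + t)) < 1 :=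
    h1.eventually (gt_mem_nhds one_pos)
  obtain ⟨T₀, hT₀⟩ := h2.exists_forall_of_atTop
  set T := max T₀ 0 with hT
  set C := max (Real.exp b) (max 1 ((1 + T) ^ d)) with hC
  refine ⟨C, lt_of_lt_of_le (Real.exp_pos b) (le_max_left _ _), fun t ht => ?_⟩
  rcases le_or_gt t T with h | h
  · have h1T : (1:ℝ) ≤ 1 + t := by linarith
    have hb1 : (1 + t) ^ d ≤ max 1 ((1 + T) ^ d) := by
      rcases le_or_gt 0 d with hd | hd
      · exact le_trans (Real.rpow_le_rpow (by linarith) (by linarith) hd) (le_max_right _ _)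
      · exact le_trans (Real.rpow_le_one_of_one_le_of_nonpos h1T hd.le) (le_max_left _ _)
    calc (1 + t) ^ d ≤ max 1 ((1 + T) ^ d) := hb1
      _ ≤ C := le_max_right _ _
      _ = C * 1 := (mul_one C).symm
      _ ≤ C * Real.exp (b * t) := by
          apply mul_le_mul_of_nonneg_left _ (le_of_lt (lt_of_lt_of_le (Real.exp_pos b)
            (le_max_left _ _)))
          exact Real.one_le_exp (by positivity)
  · have hTt : T₀ ≤ t := le_trans (le_max_left _ _) h.le
    have := hT₀ t hTt
    have hexp : (0:ℝ) < Real.exp (-b * (1 + t)) := Real.exp_pos _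
    have h3 : (1 + t) ^ d < Real.exp (b * (1 + t)) := by
      have := (lt_div_iff₀ hexp).mpr (by simpa using this)
      calc (1 + t) ^ d < 1 / Real.exp (-b * (1 + t)) := this
        _ = Real.exp (b * (1 + t)) := by
            rw [one_div, ← Real.exp_neg]; ring_nf
    have h4 : Real.exp (b * (1 + t)) = Real.exp b * Real.exp (b * t) := by
      rw [← Real.exp_add]; ring_nf
    calc (1 + t) ^ d ≤ Real.exp b * Real.exp (b * t) := by rw [← h4]; exact h3.le
      _ ≤ C * Real.exp (b * t) :=
        mul_le_mul_of_nonneg_right (le_max_left _ _) (Real.exp_pos _).le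
lemma lemU (d k : ℝ) (hk : k < 0) : ∃ Cu > (0:ℝ), ∀ r s : ℝ, 1 ≤ r → r ≤ s →
    s ^ d * Real.exp (k * s) ≤
      Cu * ((1 + r) ^ d * Real.exp (k / 2 * r)) * Real.exp (k / 2 * s) := by
  obtain ⟨C, hCpos, hC⟩ := aux_bound d (-k / 2) (by linarith)
  have h2d : (0:ℝ) < (2:ℝ) ^ (-d) := Real.rpow_pos_of_pos two_pos _
  refine ⟨max C ((2:ℝ) ^ (-d)), lt_of_lt_of_le hCpos (le_max_left _ _), fun r s hr hrs => ?_⟩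
  have hr0 : (0:ℝ) < r := by linarith
  have hs0 : (0:ℝ) < s := by linarith
  have ht0 : (0:ℝ) ≤ s - r := by linarith
  rcases le_or_gt 0 d with hd | hd
  · have hs_le : s ≤ r * (1 + (s - r)) := by nlinarith
    have h1 : s ^ d ≤ (r * (1 + (s - r))) ^ d :=
      Real.rpow_le_rpow hs0.le hs_le hd
    have h2 : (r * (1 + (s - r))) ^ d = r ^ d * (1 + (s - r)) ^ d :=
      Real.mul_rpow hr0.le (by linarith)
    have h3 : r ^ d ≤ (1 + r) ^ d := Real.rpow_le_rpow hr0.le (by linarith) hd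
    have h4 : (1 + (s - r)) ^ d ≤ C * Real.exp (-k / 2 * (s - r)) := hC _ ht0
    have h5 : s ^ d ≤ (1 + r) ^ d * (C * Real.exp (-k / 2 * (s - r))) := by
      calc s ^ d ≤ r ^ d * (1 + (s - r)) ^ d := h1.trans_eq h2
        _ ≤ (1 + r) ^ d * (C * Real.exp (-k / 2 * (s - r))) := by
            apply mul_le_mul h3 h4 (Real.rpow_nonneg (by linarith) d)
              (Real.rpow_nonneg (by linarith) d)
    have h6 : Real.exp (-k / 2 * (s - r)) * Real.exp (k * s)
        = Real.exp (k / 2 * r) * Real.exp (k / 2 * s) := by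
      rw [← Real.exp_add, ← Real.exp_add]; ring_nf
    calc s ^ d * Real.exp (k * s)
        ≤ (1 + r) ^ d * (C * Real.exp (-k / 2 * (s - r))) * Real.exp (k * s) :=
          mul_le_mul_of_nonneg_right h5 (Real.exp_pos _).le
      _ = C * (1 + r) ^ d * (Real.exp (-k / 2 * (s - r)) * Real.exp (k * s)) := by ring
      _ = C * ((1 + r) ^ d * Real.exp (k / 2 * r)) * Real.exp (k / 2 * s) := by
          rw [h6]; ring
      _ ≤ max C ((2:ℝ) ^ (-d)) * ((1 + r) ^ d * Real.exp (k / 2 * r)) * Real.exp (k / 2 * s) := by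
          apply mul_le_mul_of_nonneg_right _ (Real.exp_pos _).le
          apply mul_le_mul_of_nonneg_right (le_max_left _ _)
          positivity
  · have h1 : s ^ d ≤ r ^ d := Real.rpow_le_rpow_of_nonpos hr0 hrs hd.le
    have h2 : (2 * r) ^ d ≤ (1 + r) ^ d :=
      Real.rpow_le_rpow_of_nonpos (by linarith) (by linarith) hd.le
    have h2' : (2 * r) ^ d = (2:ℝ) ^ d * r ^ d := Real.mul_rpow (by norm_num) hr0.le
    have hinv : (2:ℝ) ^ (-d) * (2:ℝ) ^ d = 1 := by
      rw [← Real.rpow_add two_pos]; simp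
    have h3 : r ^ d ≤ (2:ℝ) ^ (-d) * (1 + r) ^ d := by
      have := mul_le_mul_of_nonneg_left (h2'.symm.trans_le h2) h2d.le
      calc r ^ d = (2:ℝ) ^ (-d) * ((2:ℝ) ^ d * r ^ d) := by
            rw [← mul_assoc, hinv, one_mul]
        _ ≤ (2:ℝ) ^ (-d) * (1 + r) ^ d := this
    have h4 : Real.exp (k * s) ≤ Real.exp (k / 2 * r) * Real.exp (k / 2 * s) := by
      rw [← Real.exp_add]
      apply Real.exp_le_exp.mpr; nlinarith
    calc s ^ d * Real.exp (k * s) ≤ ((2:ℝ) ^ (-d) * (1 + r) ^ d) * Real.exp (k * s) :=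
          mul_le_mul_of_nonneg_right (h1.trans h3) (Real.exp_pos _).le
      _ ≤ ((2:ℝ) ^ (-d) * (1 + r) ^ d) * (Real.exp (k / 2 * r) * Real.exp (k / 2 * s)) := by
          apply mul_le_mul_of_nonneg_left h4
          positivity
      _ = (2:ℝ) ^ (-d) * ((1 + r) ^ d * Real.exp (k / 2 * r)) * Real.exp (k / 2 * s) := by ring
      _ ≤ max C ((2:ℝ) ^ (-d)) * ((1 + r) ^ d * Real.exp (k / 2 * r)) * Real.exp (k / 2 * s) := by
          apply mul_le_mul_of_nonneg_right _ (Real.exp_pos _).le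
          apply mul_le_mul_of_nonneg_right (le_max_right _ _)
          positivity

lemma lemL (d k : ℝ) (hk : k < 0) : ∃ md > (0:ℝ), ∀ r s : ℝ, 1 ≤ r → r ≤ s →
    md * ((1 + r) ^ d * Real.exp (-(min d 0) * r)) * Real.exp ((k + min d 0) * s) ≤
      s ^ d * Real.exp (k * s) := by
  have h2d : (0:ℝ) < (2:ℝ) ^ (-d) := Real.rpow_pos_of_pos two_pos _
  refine ⟨min 1 ((2:ℝ) ^ (-d)), lt_min one_pos h2d, fun r s hr hrs => ?_⟩
  have hr0 : (0:ℝ) < r := by linarith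
  have hs0 : (0:ℝ) < s := by linarith
  have ht0 : (0:ℝ) ≤ s - r := by linarith
  rcases le_or_gt 0 d with hd | hd
  · have hmin : min d 0 = 0 := min_eq_right hd
    rw [hmin]
    simp only [neg_zero, zero_mul, Real.exp_zero, mul_one, add_zero]
    have h2 : (1 + r) ^ d ≤ (2 * r) ^ d :=
      Real.rpow_le_rpow (by linarith) (by linarith) hd
    have h2' : (2 * r) ^ d = (2:ℝ) ^ d * r ^ d := Real.mul_rpow (by norm_num) hr0.le
    have hinv : (2:ℝ) ^ (-d) * (2:ℝ) ^ d = 1 := by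
      rw [← Real.rpow_add two_pos]; simp
    have h3 : (2:ℝ) ^ (-d) * (1 + r) ^ d ≤ r ^ d := by
      calc (2:ℝ) ^ (-d) * (1 + r) ^ d ≤ (2:ℝ) ^ (-d) * ((2:ℝ) ^ d * r ^ d) :=
            mul_le_mul_of_nonneg_left (h2.trans_eq h2') h2d.le
        _ = r ^ d := by rw [← mul_assoc, hinv, one_mul]
    have h4 : r ^ d ≤ s ^ d := Real.rpow_le_rpow hr0.le hrs hd
    calc min 1 ((2:ℝ) ^ (-d)) * (1 + r) ^ d * Real.exp (k * s)
        ≤ (2:ℝ) ^ (-d) * (1 + r) ^ d * Real.exp (k * s) := by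
          apply mul_le_mul_of_nonneg_right _ (Real.exp_pos _).le
          exact mul_le_mul_of_nonneg_right (min_le_right _ _)
            (Real.rpow_nonneg (by linarith) d)
      _ ≤ s ^ d * Real.exp (k * s) :=
          mul_le_mul_of_nonneg_right (h3.trans h4) (Real.exp_pos _).le
  · have hmin : min d 0 = d := min_eq_left hd.le
    rw [hmin]
    have h1 : (r * (1 + (s - r))) ^ d ≤ s ^ d := by
      apply Real.rpow_le_rpow_of_nonpos hs0 _ hd.le
      nlinarith
    have h2 : (r * (1 + (s - r))) ^ d = r ^ d * (1 + (s - r)) ^ d :=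
      Real.mul_rpow hr0.le (by linarith)
    have h3 : (1 + r) ^ d ≤ r ^ d :=
      Real.rpow_le_rpow_of_nonpos hr0 (by linarith) hd.le
    have h4 : Real.exp (d * (s - r)) ≤ (1 + (s - r)) ^ d := by
      have he : 1 + (s - r) ≤ Real.exp (s - r) := by
        have := Real.add_one_le_exp (s - r); linarith
      have := Real.rpow_le_rpow_of_nonpos (by linarith) he hd.le
      calc Real.exp (d * (s - r)) = Real.exp (s - r) ^ d := by
            rw [← Real.exp_mul]; ring_nf
        _ ≤ (1 + (s - r)) ^ d := this
    have h5 : (1 + r) ^ d * Real.exp (d * (s - r)) ≤ s ^ d := by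
      calc (1 + r) ^ d * Real.exp (d * (s - r)) ≤ r ^ d * (1 + (s - r)) ^ d := by
            apply mul_le_mul h3 h4 (Real.exp_pos _).le (Real.rpow_nonneg hr0.le d)
        _ = (r * (1 + (s - r))) ^ d := h2.symm
        _ ≤ s ^ d := h1
    have h6 : Real.exp (-d * r) * Real.exp ((k + d) * s)
        = Real.exp (d * (s - r)) * Real.exp (k * s) := by
      rw [← Real.exp_add, ← Real.exp_add]; ring_nf
    calc min 1 ((2:ℝ) ^ (-d)) * ((1 + r) ^ d * Real.exp (-d * r)) * Real.exp ((k + d) * s)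
        ≤ 1 * ((1 + r) ^ d * Real.exp (-d * r)) * Real.exp ((k + d) * s) := by
          apply mul_le_mul_of_nonneg_right _ (Real.exp_pos _).le
          apply mul_le_mul_of_nonneg_right (min_le_left _ _)
          positivity
      _ = (1 + r) ^ d * (Real.exp (-d * r) * Real.exp ((k + d) * s)) := by ring
      _ = (1 + r) ^ d * Real.exp (d * (s - r)) * Real.exp (k * s) := by rw [h6]; ring
      _ ≤ s ^ d * Real.exp (k * s) :=
          mul_le_mul_of_nonneg_right h5 (Real.exp_pos _).le
/-- Integral bracketing lemma, item (f): if c > −1, k < 0 and f is continuous,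
strictly positive, with r^{-c}f(r) and r^{-d}f(r) tending to finite positive limits
at 0⁺ and ∞ respectively, then ∫_r^∞ f(s)e^{ks} ds ≃ (1+r)^d e^{kr}. -/
theorem stmt7 (c d k : ℝ) (hc : -1 < c) (hk : k < 0)
    (f : ℝ → ℝ) (hfc : ContinuousOn f (Set.Ioi 0)) (hfpos : ∀ r > (0:ℝ), 0 < f r)
    (L₀ Linf : ℝ) (hL₀ : 0 < L₀) (hLinf : 0 < Linf)
    (h0 : Tendsto (fun r : ℝ => r ^ (-c) * f r) (nhdsWithin 0 (Set.Ioi 0)) (nhds L₀))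
    (hi : Tendsto (fun r : ℝ => r ^ (-d) * f r) atTop (nhds Linf)) :
    ∃ C₁ > (0:ℝ), ∃ C₂ > (0:ℝ), ∀ r > (0:ℝ),
      C₁ * ((1 + r) ^ d * Real.exp (k * r)) ≤
        (∫ s in Set.Ioi r, f s * Real.exp (k * s)) ∧
      (∫ s in Set.Ioi r, f s * Real.exp (k * s)) ≤
        C₂ * ((1 + r) ^ d * Real.exp (k * r)) := by
  obtain ⟨Cu, hCu, hU⟩ := lemU d k hk
  obtain ⟨md, hmd, hL⟩ := lemL d k hk
  set g : ℝ → ℝ := fun s => f s * Real.exp (k * s) with hg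
  have hgc : ContinuousOn g (Set.Ioi 0) :=
    hfc.mul ((Real.continuous_exp.comp (continuous_const.mul continuous_id)).continuousOn)
  have hgpos : ∀ s > (0:ℝ), 0 < g s := fun s hs =>
    mul_pos (hfpos s hs) (Real.exp_pos _)
  -- near-zero bound
  have h0' : ∀ᶠ s in 𝓝[>] (0:ℝ), s ^ (-c) * f s < 2 * L₀ :=
    h0.eventually (gt_mem_nhds (by linarith))
  rw [eventually_nhdsWithin_iff] at h0'
  obtain ⟨ε, hε, hεP⟩ := Metric.eventually_nhds_iff.mp h0'
  have hnear : ∀ s : ℝ, 0 < s → s < ε → f s ≤ 2 * L₀ * s ^ c := by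
    intro s hs hsε
    have hd : dist s 0 < ε := by rwa [Real.dist_eq, sub_zero, abs_of_pos hs]
    have h1 := hεP hd hs
    have hsc : (0:ℝ) < s ^ c := Real.rpow_pos_of_pos hs c
    have h2 : f s = s ^ c * (s ^ (-c) * f s) := by
      rw [← mul_assoc, ← Real.rpow_add hs]
      simp
    calc f s = s ^ c * (s ^ (-c) * f s) := h2
      _ ≤ s ^ c * (2 * L₀) := mul_le_mul_of_nonneg_left h1.le hsc.le
      _ = 2 * L₀ * s ^ c := by ring
  -- at-infinity bounds
  have hi' : ∀ᶠ s in atTop, s ^ (-d) * f s ∈ Set.Ioo (Linf / 2) (2 * Linf) :=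
    hi.eventually (Ioo_mem_nhds (by linarith) (by linarith))
  obtain ⟨R₀, hR₀⟩ := hi'.exists_forall_of_atTop
  set R : ℝ := max R₀ 1 with hR
  have hR1 : (1:ℝ) ≤ R := le_max_right _ _
  have hR0 : (0:ℝ) < R := by linarith
  have hfar : ∀ s : ℝ, R ≤ s → Linf / 2 * s ^ d ≤ f s ∧ f s ≤ 2 * Linf * s ^ d := by
    intro s hs
    have hs0 : (0:ℝ) < s := by linarith
    have h1 := hR₀ s (le_trans (le_max_left _ _) hs)
    have hsd : (0:ℝ) < s ^ d := Real.rpow_pos_of_pos hs0 d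
    have h2 : f s = s ^ d * (s ^ (-d) * f s) := by
      rw [← mul_assoc, ← Real.rpow_add hs0]
      simp
    constructor
    · calc Linf / 2 * s ^ d = s ^ d * (Linf / 2) := by ring
        _ ≤ s ^ d * (s ^ (-d) * f s) := mul_le_mul_of_nonneg_left h1.1.le hsd.le
        _ = f s := h2.symm
    · calc f s = s ^ d * (s ^ (-d) * f s) := h2
        _ ≤ s ^ d * (2 * Linf) := mul_le_mul_of_nonneg_left h1.2.le hsd.le
        _ = 2 * Linf * s ^ d := by ring
  -- integrability
  have hk2 : k / 2 < 0 := by linarith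
  have IntA : IntegrableOn g (Set.Ioi 0) := by
    set ε' : ℝ := min (ε / 2) R with hε'
    have hε'0 : (0:ℝ) < ε' := lt_min (by linarith) hR0
    have hε'R : ε' ≤ R := min_le_right _ _
    have hε'ε : ε' < ε := lt_of_le_of_lt (min_le_left _ _) (by linarith)
    have I1 : IntegrableOn g (Set.Ioc 0 ε') := by
      have hb_int : IntegrableOn (fun s : ℝ => 2 * L₀ * s ^ c) (Set.Ioc 0 ε') := by
        have h := intervalIntegral.intervalIntegrable_rpow' (a := 0) (b := ε') hc
        rw [intervalIntegrable_iff_integrableOn_Ioc_of_le hε'0.le] at h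
        exact h.const_mul _
      apply Integrable.mono' hb_int
      · exact (hgc.mono (fun x hx => hx.1)).aestronglyMeasurable measurableSet_Ioc
      · refine (ae_restrict_iff' measurableSet_Ioc).mpr (Eventually.of_forall fun s hs => ?_)
        have hs0 : 0 < s := hs.1
        rw [Real.norm_of_nonneg (hgpos s hs0).le]
        calc g s = f s * Real.exp (k * s) := rfl
          _ ≤ f s * 1 := mul_le_mul_of_nonneg_left
              (Real.exp_le_one_iff.mpr (by nlinarith)) (hfpos s hs0).le
          _ = f s := mul_one _
          _ ≤ 2 * L₀ * s ^ c := hnear s hs0 (lt_of_le_of_lt hs.2 hε'ε)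
    have I2 : IntegrableOn g (Set.Ioc ε' R) := by
      have : IntegrableOn g (Set.Icc ε' R) :=
        (hgc.mono (fun x hx => lt_of_lt_of_le hε'0 hx.1)).integrableOn_Icc
      exact this.mono_set Set.Ioc_subset_Icc_self
    have I3 : IntegrableOn g (Set.Ioi R) := by
      apply Integrable.mono' (((expIntOn (k / 2) R hk2)).const_mul
        (2 * Linf * (Cu * ((1 + R) ^ d * Real.exp (k / 2 * R)))))
      · exact (hgc.mono (fun x hx => lt_of_lt_of_le hR0 (le_of_lt hx))).aestronglyMeasurable
          measurableSet_Ioi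
      · refine (ae_restrict_iff' measurableSet_Ioi).mpr (Eventually.of_forall fun s hs => ?_)
        have hs0 : 0 < s := lt_trans hR0 hs
        rw [Real.norm_of_nonneg (hgpos s hs0).le]
        calc g s = f s * Real.exp (k * s) := rfl
          _ ≤ (2 * Linf * s ^ d) * Real.exp (k * s) :=
              mul_le_mul_of_nonneg_right (hfar s hs.le).2 (Real.exp_pos _).le
          _ = 2 * Linf * (s ^ d * Real.exp (k * s)) := by ring
          _ ≤ 2 * Linf * (Cu * ((1 + R) ^ d * Real.exp (k / 2 * R)) * Real.exp (k / 2 * s)) :=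
              mul_le_mul_of_nonneg_left (hU R s hR1 hs.le) (by positivity)
          _ = 2 * Linf * (Cu * ((1 + R) ^ d * Real.exp (k / 2 * R))) * Real.exp (k / 2 * s) := by
              ring
    have I12 : IntegrableOn g (Set.Ioc 0 R) := by
      have h := I1.union I2
      rwa [Set.Ioc_union_Ioc_eq_Ioc hε'0.le hε'R] at h
    have h := I12.union I3
    rwa [Set.Ioc_union_Ioi_eq_Ioi hR0.le] at h
  -- monotonicity
  have hmono : ∀ a b : ℝ, 0 ≤ a → a ≤ b →
      (∫ s in Set.Ioi b, g s) ≤ ∫ s in Set.Ioi a, g s := by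
    intro a b ha hab
    apply setIntegral_mono_set (IntA.mono_set (Set.Ioi_subset_Ioi ha))
    · exact (ae_restrict_iff' measurableSet_Ioi).mpr (Eventually.of_forall
        fun s hs => (hgpos s (lt_of_le_of_lt ha hs)).le)
    · exact HasSubset.Subset.eventuallyLE (Set.Ioi_subset_Ioi hab)
  -- positivity
  have hpos : ∀ a : ℝ, 0 ≤ a → 0 < ∫ s in Set.Ioi a, g s := by
    intro a ha
    rw [setIntegral_pos_iff_support_of_nonneg_ae ((ae_restrict_iff' measurableSet_Ioi).mpr
      (Eventually.of_forall fun s hs => (hgpos s (lt_of_le_of_lt ha hs)).le))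
      (IntA.mono_set (Set.Ioi_subset_Ioi ha))]
    have hsub : Set.Ioi a ⊆ Function.support g ∩ Set.Ioi a := fun s hs =>
      ⟨ne_of_gt (hgpos s (lt_of_le_of_lt ha hs)), hs⟩
    have := measure_mono (μ := volume) hsub
    rw [Real.volume_Ioi] at this
    exact lt_of_lt_of_le (by simp) this
  -- large r upper bound
  have hIu : ∀ r : ℝ, R ≤ r →
      (∫ s in Set.Ioi r, g s) ≤ (4 * Linf * Cu / (-k)) * ((1 + r) ^ d * Real.exp (k * r)) := by
    intro r hRr
    have hr0 : (0:ℝ) < r := lt_of_lt_of_le hR0 hRr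
    have hr1 : (1:ℝ) ≤ r := le_trans hR1 hRr
    set A : ℝ := 2 * Linf * (Cu * ((1 + r) ^ d * Real.exp (k / 2 * r))) with hA
    have step1 : (∫ s in Set.Ioi r, g s) ≤ ∫ s in Set.Ioi r, A * Real.exp (k / 2 * s) := by
      apply setIntegral_mono_on (IntA.mono_set (Set.Ioi_subset_Ioi hr0.le))
        ((expIntOn (k / 2) r hk2).const_mul A) measurableSet_Ioi
      intro s hs
      calc g s = f s * Real.exp (k * s) := rfl
        _ ≤ (2 * Linf * s ^ d) * Real.exp (k * s) :=
            mul_le_mul_of_nonneg_right (hfar s (le_trans hRr hs.le)).2 (Real.exp_pos _).le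
        _ = 2 * Linf * (s ^ d * Real.exp (k * s)) := by ring
        _ ≤ 2 * Linf * (Cu * ((1 + r) ^ d * Real.exp (k / 2 * r)) * Real.exp (k / 2 * s)) :=
            mul_le_mul_of_nonneg_left (hU r s hr1 hs.le) (by positivity)
        _ = A * Real.exp (k / 2 * s) := by rw [hA]; ring
    have step2 : (∫ s in Set.Ioi r, A * Real.exp (k / 2 * s))
        = A * (Real.exp (k / 2 * r) / (-(k / 2))) := by
      rw [integral_const_mul, expInt (k / 2) r hk2]
    have step3 : A * (Real.exp (k / 2 * r) / (-(k / 2)))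
        = (4 * Linf * Cu / (-k)) * ((1 + r) ^ d * Real.exp (k * r)) := by
      have hee : Real.exp (k / 2 * r) * Real.exp (k / 2 * r) = Real.exp (k * r) := by
        rw [← Real.exp_add]; ring_nf
      rw [hA]
      field_simp
      rw [show Real.exp (r * k) = Real.exp (r * k / 2) ^ 2 by rw [sq, ← Real.exp_add]; ring_nf]
      ring
    rw [step2, step3] at step1
    exact step1
  -- large r lower bound
  have he₀ : k + min d 0 < 0 := by
    have : min d 0 ≤ 0 := min_le_right _ _
    linarith
  have hIl : ∀ r : ℝ, R ≤ r →
      (Linf / 2 * md / (-(k + min d 0))) * ((1 + r) ^ d * Real.exp (k * r)) ≤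
        ∫ s in Set.Ioi r, g s := by
    intro r hRr
    have hr0 : (0:ℝ) < r := lt_of_lt_of_le hR0 hRr
    have hr1 : (1:ℝ) ≤ r := le_trans hR1 hRr
    set B : ℝ := Linf / 2 * (md * ((1 + r) ^ d * Real.exp (-(min d 0) * r))) with hB
    have step1 : (∫ s in Set.Ioi r, B * Real.exp ((k + min d 0) * s)) ≤
        ∫ s in Set.Ioi r, g s := by
      apply setIntegral_mono_on ((expIntOn (k + min d 0) r he₀).const_mul B)
        (IntA.mono_set (Set.Ioi_subset_Ioi hr0.le)) measurableSet_Ioi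
      intro s hs
      calc B * Real.exp ((k + min d 0) * s)
          = Linf / 2 * (md * ((1 + r) ^ d * Real.exp (-(min d 0) * r)) *
              Real.exp ((k + min d 0) * s)) := by rw [hB]; ring
        _ ≤ Linf / 2 * (s ^ d * Real.exp (k * s)) :=
            mul_le_mul_of_nonneg_left (hL r s hr1 hs.le) (by positivity)
        _ = (Linf / 2 * s ^ d) * Real.exp (k * s) := by ring
        _ ≤ f s * Real.exp (k * s) :=
            mul_le_mul_of_nonneg_right (hfar s (le_trans hRr hs.le)).1 (Real.exp_pos _).le
        _ = g s := rfl
    have step2 : (∫ s in Set.Ioi r, B * Real.exp ((k + min d 0) * s))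
        = B * (Real.exp ((k + min d 0) * r) / (-(k + min d 0))) := by
      rw [integral_const_mul, expInt (k + min d 0) r he₀]
    have step3 : B * (Real.exp ((k + min d 0) * r) / (-(k + min d 0)))
        = (Linf / 2 * md / (-(k + min d 0))) * ((1 + r) ^ d * Real.exp (k * r)) := by
      have hee : Real.exp (-(min d 0) * r) * Real.exp ((k + min d 0) * r)
          = Real.exp (k * r) := by
        rw [← Real.exp_add]; ring_nf
      rw [hB]
      field_simp
      rw [show Real.exp (r * k) = Real.exp (-(r * min d 0)) * Real.exp (r * (k + min d 0)) by
        rw [← Real.exp_add]; ring_nf]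
    rw [step2, step3] at step1
    exact step1
  -- small r
  set mx : ℝ := max 1 ((1 + R) ^ d) with hmx
  have hmx0 : 0 < mx := lt_of_lt_of_le one_pos (le_max_left _ _)
  set mn : ℝ := min 1 ((1 + R) ^ d) * Real.exp (k * R) with hmn
  have hmn0 : 0 < mn :=
    mul_pos (lt_min one_pos (Real.rpow_pos_of_pos (by linarith) d)) (Real.exp_pos _)
  have hsmall : ∀ r : ℝ, 0 < r → r ≤ R →
      (1 + r) ^ d * Real.exp (k * r) ≤ mx ∧ mn ≤ (1 + r) ^ d * Real.exp (k * r) := by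
    intro r hr hrR
    have h1r : (1:ℝ) ≤ 1 + r := by linarith
    have hup : (1 + r) ^ d ≤ mx := by
      rcases le_or_gt 0 d with hd | hd
      · exact le_trans (Real.rpow_le_rpow (by linarith) (by linarith) hd) (le_max_right _ _)
      · exact le_trans (Real.rpow_le_one_of_one_le_of_nonpos h1r hd.le) (le_max_left _ _)
    have hlo : min 1 ((1 + R) ^ d) ≤ (1 + r) ^ d := by
      rcases le_or_gt 0 d with hd | hd
      · exact le_trans (min_le_left _ _) (Real.one_le_rpow h1r hd)
      · exact le_trans (min_le_right _ _)
          (Real.rpow_le_rpow_of_nonpos (by linarith) (by linarith) hd.le)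
    constructor
    · calc (1 + r) ^ d * Real.exp (k * r) ≤ (1 + r) ^ d * 1 :=
            mul_le_mul_of_nonneg_left (Real.exp_le_one_iff.mpr (mul_nonpos_of_nonpos_of_nonneg hk.le hr.le))
              (Real.rpow_nonneg (by linarith) d)
        _ = (1 + r) ^ d := mul_one _
        _ ≤ mx := hup
    · calc mn ≤ (1 + r) ^ d * Real.exp (k * R) :=
          mul_le_mul_of_nonneg_right hlo (Real.exp_pos _).le
        _ ≤ (1 + r) ^ d * Real.exp (k * r) :=
            mul_le_mul_of_nonneg_left (Real.exp_le_exp.mpr (mul_le_mul_of_nonpos_left hrR hk.le))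
              (Real.rpow_nonneg (by linarith) d)
  -- assemble constants
  set IR : ℝ := ∫ s in Set.Ioi R, g s with hIR
  set I0 : ℝ := ∫ s in Set.Ioi (0:ℝ), g s with hI0
  have hIRpos : 0 < IR := hpos R hR0.le
  have hI0pos : 0 < I0 := hpos 0 le_rfl
  set c₁ : ℝ := Linf / 2 * md / (-(k + min d 0)) with hc₁
  set c₂ : ℝ := 4 * Linf * Cu / (-k) with hc₂
  have hc₁0 : 0 < c₁ := by
    apply div_pos (by positivity) (by linarith)
  have hc₂0 : 0 < c₂ := by
    apply div_pos (by positivity) (by linarith)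
  refine ⟨min c₁ (IR / mx), lt_min hc₁0 (div_pos hIRpos hmx0),
    max c₂ (I0 / mn), lt_of_lt_of_le hc₂0 (le_max_left _ _), fun r hr => ?_⟩
  have hh0 : 0 ≤ (1 + r) ^ d * Real.exp (k * r) := by positivity
  rcases le_or_gt r R with hrR | hrR
  · obtain ⟨hu, hl⟩ := hsmall r hr hrR
    constructor
    · calc min c₁ (IR / mx) * ((1 + r) ^ d * Real.exp (k * r))
          ≤ (IR / mx) * mx :=
            mul_le_mul (min_le_right _ _) hu hh0 (div_pos hIRpos hmx0).le
        _ = IR := div_mul_cancel₀ IR (ne_of_gt hmx0)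
        _ ≤ ∫ s in Set.Ioi r, g s := hmono r R hr.le hrR
    · calc (∫ s in Set.Ioi r, g s) ≤ I0 := hmono 0 r le_rfl hr.le
        _ = (I0 / mn) * mn := (div_mul_cancel₀ I0 (ne_of_gt hmn0)).symm
        _ ≤ (I0 / mn) * ((1 + r) ^ d * Real.exp (k * r)) :=
            mul_le_mul_of_nonneg_left hl (div_pos hI0pos hmn0).le
        _ ≤ max c₂ (I0 / mn) * ((1 + r) ^ d * Real.exp (k * r)) :=
            mul_le_mul_of_nonneg_right (le_max_right _ _) hh0
  · constructor
    · exact le_trans (mul_le_mul_of_nonneg_right (min_le_left _ _) hh0) (hIl r hrR.le)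
    · exact le_trans (hIu r hrR.le)
        (mul_le_mul_of_nonneg_right (le_max_left _ _) hh0)
end

section
/- For h ∈ [0,1) and all r > 0, ∫_r^∞ (1+4h+2s)^{-1/2+h} e^{-s} ds ≤ (6/5) · (1+4h+2r)^{-1/2+h} e^{-r}. -/
open Real MeasureTheory Filter Set

lemma aux_deriv (c r : ℝ) (s : ℝ) :
    HasDerivAt (fun s => -(Real.exp (-s) * (1 + c + c * (s - r))))
      (Real.exp (-s) * (1 + c * (s - r))) s := by
  have h1 : HasDerivAt (fun s : ℝ => Real.exp (-s)) (-Real.exp (-s)) s := by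
    simpa using (hasDerivAt_neg s).exp
  have h2 : HasDerivAt (fun s : ℝ => 1 + c + c * (s - r)) c s := by
    simpa using ((hasDerivAt_id s).sub_const r).const_mul c |>.const_add (1 + c)
  have : HasDerivAt (fun s => -(Real.exp (-s) * (1 + c + c * (s - r)))) _ s := (h1.mul h2).neg
  convert this using 1
  ring

lemma aux_int (c r : ℝ) (hc : 0 ≤ c) :
    IntegrableOn (fun s => Real.exp (-s) * (1 + c * (s - r))) (Set.Ioi r) ∧
    ∫ s in Set.Ioi r, Real.exp (-s) * (1 + c * (s - r)) = (1 + c) * Real.exp (-r) := by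
  have hderiv : ∀ x ∈ Set.Ici r, HasDerivAt (fun s => -(Real.exp (-s) * (1 + c + c * (s - r))))
      (Real.exp (-x) * (1 + c * (x - r))) x := fun x _ => aux_deriv c r x
  have hpos : ∀ x ∈ Set.Ioi r, 0 ≤ Real.exp (-x) * (1 + c * (x - r)) := by
    intro x hx
    have : (0:ℝ) ≤ c * (x - r) := mul_nonneg hc (by simp at hx; linarith)
    positivity
  have htend : Tendsto (fun s => -(Real.exp (-s) * (1 + c + c * (s - r)))) atTop (nhds 0) := by
    have h0 : Tendsto (fun s : ℝ => Real.exp (-s)) atTop (nhds 0) := tendsto_exp_neg_atTop_nhds_zero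
    have h1 : Tendsto (fun s : ℝ => s * Real.exp (-s)) atTop (nhds 0) := by
      simpa using Real.tendsto_pow_mul_exp_neg_atTop_nhds_zero 1
    have : Tendsto (fun s : ℝ => Real.exp (-s) * (1 + c + c * (s - r))) atTop (nhds 0) := by
      have := ((h0.const_mul (1 + c - c * r)).add (h1.const_mul c))
      simp only [mul_zero, add_zero, zero_add] at this
      convert this using 2 with s
      ring
    simpa using this.neg
  refine ⟨integrableOn_Ioi_deriv_of_nonneg' hderiv hpos htend, ?_⟩
  rw [integral_Ioi_of_hasDerivAt_of_nonneg' hderiv hpos htend]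
  ring

/-- For h ∈ [0,1) and all r > 0,
∫_r^∞ (1+4h+2s)^{-1/2+h} e^{-s} ds ≤ (6/5)(1+4h+2r)^{-1/2+h} e^{-r}. -/
theorem stmt10 (h : ℝ) (hh0 : 0 ≤ h) (hh1 : h < 1) (r : ℝ) (hr : 0 < r) :
    (∫ s in Set.Ioi r, (1 + 4 * h + 2 * s) ^ (-(1:ℝ)/2 + h) * Real.exp (-s)) ≤
      (6/5) * (1 + 4 * h + 2 * r) ^ (-(1:ℝ)/2 + h) * Real.exp (-r) := by
  set α : ℝ := -(1:ℝ)/2 + h with hα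
  set b : ℝ := 1 + 4 * h + 2 * r with hb
  have hb0 : 0 < b := by nlinarith
  set c : ℝ := max (2 * h - 1) 0 / b with hc
  have hc0 : 0 ≤ c := div_nonneg (le_max_right _ _) hb0.le
  have hc5 : c ≤ 1 / 5 := by
    rw [hc, div_le_iff₀ hb0]
    rcases le_total (2 * h - 1) 0 with hle | hle
    · rw [max_eq_right hle]; nlinarith
    · rw [max_eq_left hle]; nlinarith
  -- pointwise bound
  have hbound : ∀ s ∈ Set.Ioi r, (1 + 4 * h + 2 * s) ^ α * Real.exp (-s) ≤
      b ^ α * (Real.exp (-s) * (1 + c * (s - r))) := by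
    intro s hs
    simp only [Set.mem_Ioi] at hs
    have hbase : (0:ℝ) < 1 + 4 * h + 2 * s := by nlinarith
    rcases le_total h (1/2) with hh | hh
    · -- α ≤ 0, monotone decreasing
      have hα0 : α ≤ 0 := by rw [hα]; linarith
      have h1 : (1 + 4 * h + 2 * s) ^ α ≤ b ^ α :=
        Real.rpow_le_rpow_of_nonpos hb0 (by nlinarith) hα0
      have h2 : (0:ℝ) ≤ c * (s - r) := mul_nonneg hc0 (by linarith)
      calc (1 + 4 * h + 2 * s) ^ α * Real.exp (-s) ≤ b ^ α * Real.exp (-s) := by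
            exact mul_le_mul_of_nonneg_right h1 (Real.exp_pos _).le
        _ ≤ b ^ α * (Real.exp (-s) * (1 + c * (s - r))) := by
            rw [mul_comm (Real.exp (-s))]
            rw [← mul_assoc]
            have : (0:ℝ) ≤ b ^ α * Real.exp (-s) := by positivity
            nlinarith
    · -- α ≥ 0, Bernoulli
      have hα0 : 0 ≤ α := by rw [hα]; linarith
      have hα1 : α ≤ 1 := by rw [hα]; linarith
      have hx : (0:ℝ) ≤ 2 * (s - r) / b := div_nonneg (by linarith) hb0.le
      have key : (1 + 4 * h + 2 * s) ^ α ≤ b ^ α * (1 + c * (s - r)) := by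
        have hrw : 1 + 4 * h + 2 * s = b * (1 + 2 * (s - r) / b) := by
          field_simp; ring
        rw [hrw, Real.mul_rpow hb0.le (by linarith)]
        have hbern : (1 + 2 * (s - r) / b) ^ α ≤ 1 + α * (2 * (s - r) / b) :=
          rpow_one_add_le_one_add_mul_self (by linarith) hα0 hα1
        have hcc : α * (2 * (s - r) / b) = c * (s - r) := by
          rw [hc, max_eq_left (by linarith), hα]
          field_simp; ring
        rw [hcc] at hbern
        exact mul_le_mul_of_nonneg_left hbern (Real.rpow_nonneg hb0.le α)
      calc (1 + 4 * h + 2 * s) ^ α * Real.exp (-s)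
          ≤ b ^ α * (1 + c * (s - r)) * Real.exp (-s) :=
            mul_le_mul_of_nonneg_right key (Real.exp_pos _).le
        _ = b ^ α * (Real.exp (-s) * (1 + c * (s - r))) := by ring
  obtain ⟨hgint, hgval⟩ := aux_int c r hc0
  have hgint' : IntegrableOn (fun s => b ^ α * (Real.exp (-s) * (1 + c * (s - r))))
      (Set.Ioi r) := hgint.const_mul _
  -- integrability of f
  have hfmeas : AEStronglyMeasurable (fun s => (1 + 4 * h + 2 * s) ^ α * Real.exp (-s))
      (volume.restrict (Set.Ioi r)) := by
    apply ContinuousOn.aestronglyMeasurable _ measurableSet_Ioi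
    apply ContinuousOn.mul
    · apply ContinuousOn.rpow_const (by fun_prop)
      intro x hx
      simp only [Set.mem_Ioi] at hx
      left; nlinarith
    · fun_prop
  have hfint : IntegrableOn (fun s => (1 + 4 * h + 2 * s) ^ α * Real.exp (-s)) (Set.Ioi r) := by
    apply hgint'.mono' hfmeas
    filter_upwards [ae_restrict_mem measurableSet_Ioi] with s hs
    simp only [Set.mem_Ioi] at hs
    have hbase : (0:ℝ) < 1 + 4 * h + 2 * s := by nlinarith
    rw [Real.norm_eq_abs, abs_of_nonneg (by positivity)]
    exact hbound s hs
  calc (∫ s in Set.Ioi r, (1 + 4 * h + 2 * s) ^ α * Real.exp (-s))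
      ≤ ∫ s in Set.Ioi r, b ^ α * (Real.exp (-s) * (1 + c * (s - r))) :=
        setIntegral_mono_on hfint hgint' measurableSet_Ioi hbound
    _ = b ^ α * ((1 + c) * Real.exp (-r)) := by
        rw [integral_const_mul, hgval]
    _ ≤ 6/5 * b ^ α * Real.exp (-r) := by
        have h1 : (0:ℝ) ≤ b ^ α := Real.rpow_nonneg hb0.le α
        have h2 : (1 + c) ≤ 6/5 := by linarith
        nlinarith [Real.exp_pos (-r), mul_le_mul_of_nonneg_left h2 h1]
end

section
/- For h ∈ (0,1) and all r > 0, ∫_r^∞ s²·(4h+2s)^{-1}·(1+4h+2s)^h·e^{-s} ds ≥ (e^{-2}/8)·(1+4h+2r)^{1+h}·e^{-r}. -/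
open Real MeasureTheory

/-- Antiderivative computation: ∫_{Ioi a} (s-c) e^{-s} ds = (a+1-c) e^{-a}, with integrability. -/
lemma aux_lin (c a : ℝ) (hca : c ≤ a) :
    MeasureTheory.IntegrableOn (fun s => (s - c) * Real.exp (-s)) (Set.Ioi a) ∧
      ∫ s in Set.Ioi a, (s - c) * Real.exp (-s) = (a + 1 - c) * Real.exp (-a) := by
  have hderiv : ∀ x : ℝ, HasDerivAt (fun s => -((s + 1 - c) * Real.exp (-s)))
      ((x - c) * Real.exp (-x)) x := by
    intro x
    have h1 : HasDerivAt (fun s : ℝ => s + 1 - c) 1 x :=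
      ((hasDerivAt_id x).add_const 1).sub_const c
    have h2 : HasDerivAt (fun s : ℝ => Real.exp (-s)) (-Real.exp (-x)) x := by
      simpa using ((hasDerivAt_id x).neg.exp)
    have : HasDerivAt (fun s => -((s + 1 - c) * Real.exp (-s))) _ x := (h1.mul h2).neg
    convert this using 1
    ring
  have htend : Filter.Tendsto (fun s => -((s + 1 - c) * Real.exp (-s))) Filter.atTop (nhds 0) := by
    have t1 := Real.tendsto_pow_mul_exp_neg_atTop_nhds_zero 1
    have t0 := Real.tendsto_exp_neg_atTop_nhds_zero
    have := ((t1.add (t0.const_mul (1 - c))).neg)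
    simp only [neg_zero, add_zero, mul_zero, neg_add_rev, pow_one] at this ⊢
    refine this.congr fun s => by ring
  have hcont : ContinuousWithinAt (fun s => -((s + 1 - c) * Real.exp (-s))) (Set.Ici a) a :=
    (hderiv a).continuousAt.continuousWithinAt
  have hpos : ∀ x ∈ Set.Ioi a, 0 ≤ (x - c) * Real.exp (-x) := fun x hx =>
    mul_nonneg (by simp only [Set.mem_Ioi] at hx; linarith) (Real.exp_pos _).le
  refine ⟨MeasureTheory.integrableOn_Ioi_deriv_of_nonneg hcont (fun x _ => hderiv x) hpos htend, ?_⟩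
  rw [MeasureTheory.integral_Ioi_of_hasDerivAt_of_nonneg hcont (fun x _ => hderiv x) hpos htend]
  ring

/-- Integrability of s² e^{-s} on Ioi a. -/
lemma aux_sq (a : ℝ) :
    MeasureTheory.IntegrableOn (fun s => s ^ 2 * Real.exp (-s)) (Set.Ioi a) := by
  have hderiv : ∀ x : ℝ, HasDerivAt (fun s => -((s ^ 2 + 2 * s + 2) * Real.exp (-s)))
      (x ^ 2 * Real.exp (-x)) x := by
    intro x
    have h1 : HasDerivAt (fun s : ℝ => s ^ 2 + 2 * s + 2) (2 * x + 2) x := by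
      have := ((hasDerivAt_pow 2 x).add ((hasDerivAt_id x).const_mul 2)).add_const 2
      simpa using this
    have h2 : HasDerivAt (fun s : ℝ => Real.exp (-s)) (-Real.exp (-x)) x := by
      simpa using ((hasDerivAt_id x).neg.exp)
    have : HasDerivAt (fun s => -((s ^ 2 + 2 * s + 2) * Real.exp (-s))) _ x := (h1.mul h2).neg
    convert this using 1
    ring
  have htend : Filter.Tendsto (fun s => -((s ^ 2 + 2 * s + 2) * Real.exp (-s)))
      Filter.atTop (nhds 0) := by
    have t2 := Real.tendsto_pow_mul_exp_neg_atTop_nhds_zero 2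
    have t1 := Real.tendsto_pow_mul_exp_neg_atTop_nhds_zero 1
    have t0 := Real.tendsto_exp_neg_atTop_nhds_zero
    have := ((t2.add ((t1.const_mul 2).add (t0.const_mul 2))).neg)
    simp only [neg_zero, add_zero, mul_zero, pow_one] at this ⊢
    refine this.congr fun s => by ring
  have hcont : ContinuousWithinAt (fun s => -((s ^ 2 + 2 * s + 2) * Real.exp (-s)))
      (Set.Ici a) a := (hderiv a).continuousAt.continuousWithinAt
  exact MeasureTheory.integrableOn_Ioi_deriv_of_nonneg hcont (fun x _ => hderiv x)
    (fun x _ => mul_nonneg (sq_nonneg x) (Real.exp_pos _).le) htend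

/-- Lower bound K₁₄: for h ∈ (0,1) and r > 0,
∫_r^∞ s²(4h+2s)⁻¹(1+4h+2s)^h e^{-s} ds ≥ (e^{-2}/8)(1+4h+2r)^{1+h} e^{-r}. -/
theorem stmt11 (h : ℝ) (hh0 : 0 < h) (hh1 : h < 1) (r : ℝ) (hr : 0 < r) :
    (Real.exp (-2) / 8) * (1 + 4 * h + 2 * r) ^ (1 + h) * Real.exp (-r) ≤
      ∫ s in Set.Ioi r,
        s ^ 2 * (4 * h + 2 * s)⁻¹ * (1 + 4 * h + 2 * s) ^ h * Real.exp (-s) := by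
  set f : ℝ → ℝ := fun s => s ^ 2 * (4 * h + 2 * s)⁻¹ * (1 + 4 * h + 2 * s) ^ h * Real.exp (-s)
    with hf_def
  have hBpos : (0:ℝ) < 1 + 4 * h + 2 * r := by linarith
  -- nonnegativity of f on Ioi r
  have hf_nonneg : ∀ s ∈ Set.Ioi r, 0 ≤ f s := by
    intro s hs
    simp only [Set.mem_Ioi] at hs
    have hs0 : 0 < s := hr.trans hs
    have : (0:ℝ) < 4 * h + 2 * s := by linarith
    positivity
  -- continuity, hence measurability, of f on Ioi r
  have hf_cont : ContinuousOn f (Set.Ioi r) := by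
    have c1 : ContinuousOn (fun s : ℝ => s ^ 2) (Set.Ioi r) := by fun_prop
    have c2 : ContinuousOn (fun s : ℝ => (4 * h + 2 * s)⁻¹) (Set.Ioi r) := by
      refine ContinuousOn.inv₀ (by fun_prop) fun x hx => ?_
      simp only [Set.mem_Ioi] at hx
      have : (0:ℝ) < 4 * h + 2 * x := by nlinarith [hr.trans hx]
      exact ne_of_gt this
    have c3 : ContinuousOn (fun s : ℝ => (1 + 4 * h + 2 * s) ^ h) (Set.Ioi r) := by
      refine ContinuousOn.rpow_const (by fun_prop) fun x _ => Or.inr hh0.le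
    have c4 : ContinuousOn (fun s : ℝ => Real.exp (-s)) (Set.Ioi r) := by fun_prop
    exact ((c1.mul c2).mul c3).mul c4
  -- integrability of f on Ioi r
  have hint_dom : MeasureTheory.IntegrableOn
      (fun s => (1 / 2 + 2 * h) * ((s - 0) * Real.exp (-s)) + s ^ 2 * Real.exp (-s))
      (Set.Ioi r) := ((aux_lin 0 r hr.le).1.const_mul _).add (aux_sq r)
  have hf_int : MeasureTheory.IntegrableOn f (Set.Ioi r) := by
    refine MeasureTheory.Integrable.mono' hint_dom
      (hf_cont.aestronglyMeasurable measurableSet_Ioi) ?_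
    filter_upwards [MeasureTheory.ae_restrict_mem measurableSet_Ioi] with s hs
    simp only [Set.mem_Ioi] at hs
    have hs0 : 0 < s := hr.trans hs
    have h4s : (0:ℝ) < 4 * h + 2 * s := by linarith
    rw [Real.norm_of_nonneg (hf_nonneg s hs)]
    have h1 : s ^ 2 * (4 * h + 2 * s)⁻¹ ≤ s / 2 := by
      rw [mul_inv_le_iff₀ h4s]
      nlinarith
    have h2 : (1 + 4 * h + 2 * s) ^ h ≤ 1 + 4 * h + 2 * s := by
      nth_rewrite 2 [← Real.rpow_one (1 + 4 * h + 2 * s)]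
      exact Real.rpow_le_rpow_of_exponent_le (by linarith) hh1.le
    have h3 : f s ≤ (s / 2) * (1 + 4 * h + 2 * s) * Real.exp (-s) := by
      rw [hf_def]
      have := mul_le_mul h1 h2 (Real.rpow_nonneg (by linarith) h) (by linarith)
      exact mul_le_mul_of_nonneg_right this (Real.exp_pos _).le
    calc f s ≤ (s / 2) * (1 + 4 * h + 2 * s) * Real.exp (-s) := h3
      _ = (1 / 2 + 2 * h) * ((s - 0) * Real.exp (-s)) + s ^ 2 * Real.exp (-s) := by ring
  -- the minorant g on Ioi (r + 2h)
  set C : ℝ := (1 + 4 * h + 2 * r) ^ h / 4 with hC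
  have hg := aux_lin 0 (r + 2 * h) (by linarith)
  have hg_int : MeasureTheory.IntegrableOn
      (fun s => C * ((s - 0) * Real.exp (-s))) (Set.Ioi (r + 2 * h)) := hg.1.const_mul C
  have hg_val : ∫ s in Set.Ioi (r + 2 * h), C * ((s - 0) * Real.exp (-s))
      = C * ((r + 2 * h + 1) * Real.exp (-(r + 2 * h))) := by
    rw [MeasureTheory.integral_const_mul, hg.2]
    ring_nf
  -- step 1: restrict to Ioi (r + 2h)
  have step1 : ∫ s in Set.Ioi (r + 2 * h), f s ≤ ∫ s in Set.Ioi r, f s := by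
    refine MeasureTheory.setIntegral_mono_set hf_int ?_
      (HasSubset.Subset.eventuallyLE (Set.Ioi_subset_Ioi (by linarith)))
    filter_upwards [MeasureTheory.ae_restrict_mem measurableSet_Ioi] with s hs
    exact hf_nonneg s hs
  -- step 2: pointwise bound on Ioi (r + 2h)
  have step2 : ∫ s in Set.Ioi (r + 2 * h), C * ((s - 0) * Real.exp (-s))
      ≤ ∫ s in Set.Ioi (r + 2 * h), f s := by
    refine MeasureTheory.setIntegral_mono_on hg_int
      (hf_int.mono_set (Set.Ioi_subset_Ioi (by linarith))) measurableSet_Ioi ?_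
    intro s hs
    simp only [Set.mem_Ioi] at hs
    have hs2h : 2 * h < s := by linarith
    have hs0 : 0 < s := by linarith
    have h4s : (0:ℝ) < 4 * h + 2 * s := by linarith
    have h1 : s / 4 ≤ s ^ 2 * (4 * h + 2 * s)⁻¹ := by
      rw [← div_eq_mul_inv, le_div_iff₀ h4s]
      nlinarith [mul_pos hs0 (by linarith : (0:ℝ) < s / 2 - h)]
    have h2 : (1 + 4 * h + 2 * r) ^ h ≤ (1 + 4 * h + 2 * s) ^ h :=
      Real.rpow_le_rpow hBpos.le (by linarith) hh0.le
    calc C * ((s - 0) * Real.exp (-s))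
        = (s / 4) * (1 + 4 * h + 2 * r) ^ h * Real.exp (-s) := by rw [hC]; ring
      _ ≤ (s ^ 2 * (4 * h + 2 * s)⁻¹) * (1 + 4 * h + 2 * s) ^ h * Real.exp (-s) := by
          refine mul_le_mul (mul_le_mul h1 h2 (Real.rpow_nonneg hBpos.le h) (by positivity))
            le_rfl (Real.exp_pos _).le ?_
          positivity
      _ = f s := by rw [hf_def]
  -- final numeric inequality
  have final : (Real.exp (-2) / 8) * (1 + 4 * h + 2 * r) ^ (1 + h) * Real.exp (-r)
      ≤ C * ((r + 2 * h + 1) * Real.exp (-(r + 2 * h))) := by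
    have hrpow : (1 + 4 * h + 2 * r) ^ (1 + h)
        = (1 + 4 * h + 2 * r) * (1 + 4 * h + 2 * r) ^ h := by
      rw [Real.rpow_add hBpos, Real.rpow_one]
    have hexp : Real.exp (-(r + 2 * h)) = Real.exp (-r) * Real.exp (-(2 * h)) := by
      rw [← Real.exp_add]; ring_nf
    have he : Real.exp (-2) ≤ Real.exp (-(2 * h)) := Real.exp_le_exp.2 (by linarith)
    have hb : 1 + 4 * h + 2 * r ≤ 2 * (r + 2 * h + 1) := by linarith
    have key := mul_le_mul he hb hBpos.le (Real.exp_pos _).le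
    have hA : (0:ℝ) ≤ (1 + 4 * h + 2 * r) ^ h := Real.rpow_nonneg hBpos.le h
    have hE : (0:ℝ) ≤ Real.exp (-r) := (Real.exp_pos _).le
    rw [hrpow, hexp, hC]
    nlinarith [mul_le_mul_of_nonneg_right key (mul_nonneg hA hE)]
  calc (Real.exp (-2) / 8) * (1 + 4 * h + 2 * r) ^ (1 + h) * Real.exp (-r)
      ≤ C * ((r + 2 * h + 1) * Real.exp (-(r + 2 * h))) := final
    _ = ∫ s in Set.Ioi (r + 2 * h), C * ((s - 0) * Real.exp (-s)) := hg_val.symm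
    _ ≤ ∫ s in Set.Ioi (r + 2 * h), f s := step2
    _ ≤ ∫ s in Set.Ioi r, f s := step1
end

section
/- Let h ≥ 0, let β(r) = r/(r+2h) > 0 for r > 0, and suppose χ ∈ C²((0,∞)) solves χ''(r) = (2(r+3h)/(r(r+2h)))·χ'(r) + (r/(r+2h))·χ(r) with boundary conditions χ(r) → 1 as r → 0⁺ and χ(r) → 0 as r → ∞, and χ is not identically zero. Then 0 < χ(r) < 1 and χ'(r) < 0 for all r > 0. -/
open Real Filter Topology

/-- Sign lemma for the electric-deviation scalar: if χ ∈ C²((0,∞)) solves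
χ'' = (2(r+3h)/(r(r+2h)))χ' + (r/(r+2h))χ with χ(0⁺)=1, χ(∞)=0, and χ is not
identically zero, then 0 < χ < 1 and χ' < 0 on (0,∞). (Here β(r)=r/(r+2h)>0.) -/
theorem stmt15 (h : ℝ) (hh : 0 ≤ h) (χ : ℝ → ℝ)
    (hχ : ContDiffOn ℝ 2 χ (Set.Ioi 0))
    (hODE : ∀ r > (0:ℝ), deriv (deriv χ) r =
      (2 * (r + 3 * h) / (r * (r + 2 * h))) * deriv χ r + (r / (r + 2 * h)) * χ r)
    (h0 : Tendsto χ (nhdsWithin 0 (Set.Ioi 0)) (nhds 1))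
    (hinf : Tendsto χ atTop (nhds 0))
    (hne : ¬ ∀ r > (0:ℝ), χ r = 0) :
    ∀ r > (0:ℝ), 0 < χ r ∧ χ r < 1 ∧ deriv χ r < 0 := by
  have hopen : IsOpen (Set.Ioi (0:ℝ)) := isOpen_Ioi
  have hsub : ∀ {a b : ℝ}, 0 < a → Set.Icc a b ⊆ Set.Ioi 0 :=
    fun ha x hx => lt_of_lt_of_le ha hx.1
  have hd1 : ∀ r, 0 < r → HasDerivAt χ (deriv χ r) r := by
    intro r hr
    exact ((hχ.differentiableOn (by norm_num)).differentiableAt (hopen.mem_nhds hr)).hasDerivAt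
  have hχd : ContDiffOn ℝ 1 (deriv χ) (Set.Ioi 0) := hχ.deriv_of_isOpen hopen (by norm_num)
  have hd2 : ∀ r, 0 < r → HasDerivAt (deriv χ) (deriv (deriv χ) r) r := by
    intro r hr
    exact ((hχd.differentiableOn (by norm_num)).differentiableAt (hopen.mem_nhds hr)).hasDerivAt
  have hcont : ContinuousOn χ (Set.Ioi 0) := hχ.continuousOn
  have hcont' : ContinuousOn (deriv χ) (Set.Ioi 0) := hχd.continuousOn
  have key : ∀ m, 0 < m → deriv χ m = 0 → 0 < χ m →
      (∀ᶠ r in 𝓝[>] m, 0 < deriv χ r) ∧ (∀ᶠ r in 𝓝[<] m, deriv χ r < 0) := by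
    intro m hm hdm hcm
    have h2m : 0 < m + 2*h := by linarith
    have hL : 0 < deriv (deriv χ) m := by
      rw [hODE m hm, hdm, mul_zero, zero_add]
      positivity
    have hslope : Tendsto (slope (deriv χ) m) (𝓝[≠] m) (𝓝 (deriv (deriv χ) m)) :=
      hasDerivAt_iff_tendsto_slope.1 (hd2 m hm)
    have hev : ∀ᶠ r in 𝓝[≠] m, 0 < slope (deriv χ) m r :=
      hslope.eventually (eventually_gt_nhds hL)
    constructor
    · have h1 : ∀ᶠ r in 𝓝[>] m, 0 < slope (deriv χ) m r :=
        hev.filter_mono (nhdsWithin_mono m fun x hx => ne_of_gt hx)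
      filter_upwards [h1, self_mem_nhdsWithin] with r hr hr'
      rw [slope_def_field, hdm, sub_zero] at hr
      rcases div_pos_iff.1 hr with ⟨h1, h2⟩ | ⟨h1, h2⟩
      · exact h1
      · have : m < r := hr'
        linarith
    · have h1 : ∀ᶠ r in 𝓝[<] m, 0 < slope (deriv χ) m r :=
        hev.filter_mono (nhdsWithin_mono m fun x hx => ne_of_lt hx)
      filter_upwards [h1, self_mem_nhdsWithin] with r hr hr'
      rw [slope_def_field, hdm, sub_zero] at hr
      rcases div_pos_iff.1 hr with ⟨h1, h2⟩ | ⟨h1, h2⟩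
      · have : r < m := hr'
        linarith
      · exact h1
  have keyneg : ∀ m, 0 < m → deriv χ m = 0 → χ m < 0 →
      ∀ᶠ r in 𝓝[>] m, deriv χ r < 0 := by
    intro m hm hdm hcm
    have h2m : 0 < m + 2*h := by linarith
    have hL : deriv (deriv χ) m < 0 := by
      rw [hODE m hm, hdm, mul_zero, zero_add]
      exact mul_neg_of_pos_of_neg (div_pos hm h2m) hcm
    have hev : ∀ᶠ r in 𝓝[≠] m, slope (deriv χ) m r < 0 :=
      (hasDerivAt_iff_tendsto_slope.1 (hd2 m hm)).eventually (eventually_lt_nhds hL)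
    filter_upwards [hev.filter_mono (nhdsWithin_mono m fun x hx => ne_of_gt hx),
      self_mem_nhdsWithin] with r hr hr'
    rw [slope_def_field, hdm, sub_zero] at hr
    rcases div_neg_iff.1 hr with ⟨h1, h2⟩ | ⟨h1, h2⟩
    · have : m < r := hr'
      linarith
    · exact h1
  have mono_right : ∀ m u, 0 < m → m < u → (∀ x ∈ Set.Ioo m u, 0 < deriv χ x) →
      ∀ w ∈ Set.Ioo m u, χ m < χ w := by
    intro m u hm hmu hp w hw
    have hSM : StrictMonoOn χ (Set.Icc m w) := by
      apply strictMonoOn_of_deriv_pos (convex_Icc m w) (hcont.mono (hsub hm))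
      intro x hx
      rw [interior_Icc] at hx
      exact hp x ⟨hx.1, lt_trans hx.2 hw.2⟩
    exact hSM (Set.left_mem_Icc.2 (le_of_lt hw.1)) ⟨le_of_lt hw.1, le_refl w⟩ hw.1
  have anti_right : ∀ m u, 0 < m → m < u → (∀ x ∈ Set.Ioo m u, deriv χ x < 0) →
      ∀ w ∈ Set.Ioo m u, χ w < χ m := by
    intro m u hm hmu hp w hw
    have hSA : StrictAntiOn χ (Set.Icc m w) := by
      apply strictAntiOn_of_deriv_neg (convex_Icc m w) (hcont.mono (hsub hm))
      intro x hx
      rw [interior_Icc] at hx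
      exact hp x ⟨hx.1, lt_trans hx.2 hw.2⟩
    exact hSA (Set.left_mem_Icc.2 (le_of_lt hw.1)) ⟨le_of_lt hw.1, le_refl w⟩ hw.1
  -- χ ≥ 0
  have hnn : ∀ r, 0 < r → 0 ≤ χ r := by
    by_contra hc
    push_neg at hc
    obtain ⟨r₀, hr₀, hneg⟩ := hc
    have hev0 : ∀ᶠ r in 𝓝[>] (0:ℝ), 1/2 < χ r :=
      h0.eventually (eventually_gt_nhds (by norm_num))
    have hmem : Set.Ioo (0:ℝ) r₀ ∈ 𝓝[>] (0:ℝ) :=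
      Ioo_mem_nhdsGT_of_mem ⟨le_refl 0, hr₀⟩
    obtain ⟨a, ha2, ha1⟩ := (hev0.and (eventually_of_mem hmem fun x hx => hx)).exists
    have hapos : 0 < a := ha1.1
    have har₀ : a < r₀ := ha1.2
    have hevb : ∀ᶠ r in atTop, χ r₀ < χ r := hinf.eventually (eventually_gt_nhds hneg)
    obtain ⟨b, hb1, hb2⟩ := (hevb.and (eventually_gt_atTop r₀)).exists
    have hab : a ≤ b := le_of_lt (lt_trans har₀ hb2)
    obtain ⟨m, hmmem, hmin⟩ := isCompact_Icc.exists_isMinOn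
      (Set.nonempty_Icc.2 hab) (hcont.mono (hsub hapos))
    have hm0 : 0 < m := lt_of_lt_of_le hapos hmmem.1
    have hmle : χ m ≤ χ r₀ := hmin ⟨le_of_lt har₀, le_of_lt hb2⟩
    have hma : m ≠ a := by
      intro e
      rw [e] at hmle
      linarith
    have hmb : m ≠ b := by
      intro e
      rw [e] at hmle
      linarith
    have hmI : m ∈ Set.Ioo a b :=
      ⟨lt_of_le_of_ne hmmem.1 (Ne.symm hma), lt_of_le_of_ne hmmem.2 hmb⟩
    have hder0 : deriv χ m = 0 :=
      (hmin.isLocalMin (Icc_mem_nhds hmI.1 hmI.2)).deriv_eq_zero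
    have hχm : χ m < 0 := lt_of_le_of_lt hmle hneg
    obtain ⟨u, hu, hsubu⟩ :=
      mem_nhdsGT_iff_exists_Ioo_subset.1 (keyneg m hm0 hder0 hχm)
    have hmu : m < u := hu
    set w := min ((m+u)/2) ((m+b)/2) with hw
    have hw1 : m < w := lt_min (by linarith) (by linarith [hmI.2])
    have hwu : w < u := lt_of_le_of_lt (min_le_left _ _) (by linarith)
    have hwb : w < b := lt_of_le_of_lt (min_le_right _ _) (by linarith [hmI.2])
    have hlt : χ w < χ m :=
      anti_right m u hm0 hmu (fun x hx => hsubu hx) w ⟨hw1, hwu⟩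
    have : χ m ≤ χ w :=
      hmin ⟨le_of_lt (lt_of_lt_of_le hmI.1 (le_of_lt hw1)), le_of_lt hwb⟩
    linarith
  -- χ ≤ 1
  have hle1 : ∀ r, 0 < r → χ r ≤ 1 := by
    by_contra hc
    push_neg at hc
    obtain ⟨r₀, hr₀, hgt⟩ := hc
    have hev0 : ∀ᶠ r in 𝓝[>] (0:ℝ), χ r < χ r₀ := h0.eventually (eventually_lt_nhds hgt)
    have hmem : Set.Ioo (0:ℝ) r₀ ∈ 𝓝[>] (0:ℝ) :=
      Ioo_mem_nhdsGT_of_mem ⟨le_refl 0, hr₀⟩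
    obtain ⟨a, ha2, ha1⟩ := (hev0.and (eventually_of_mem hmem fun x hx => hx)).exists
    have hapos : 0 < a := ha1.1
    have har₀ : a < r₀ := ha1.2
    have hevb : ∀ᶠ r in atTop, χ r < χ r₀ :=
      hinf.eventually (eventually_lt_nhds (by linarith))
    obtain ⟨b, hb1, hb2⟩ := (hevb.and (eventually_gt_atTop r₀)).exists
    have hab : a ≤ b := le_of_lt (lt_trans har₀ hb2)
    obtain ⟨m, hmmem, hmax⟩ := isCompact_Icc.exists_isMaxOn
      (Set.nonempty_Icc.2 hab) (hcont.mono (hsub hapos))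
    have hm0 : 0 < m := lt_of_lt_of_le hapos hmmem.1
    have hmge : χ r₀ ≤ χ m := hmax ⟨le_of_lt har₀, le_of_lt hb2⟩
    have hma : m ≠ a := by
      intro e
      rw [e] at hmge
      linarith
    have hmb : m ≠ b := by
      intro e
      rw [e] at hmge
      linarith
    have hmI : m ∈ Set.Ioo a b :=
      ⟨lt_of_le_of_ne hmmem.1 (Ne.symm hma), lt_of_le_of_ne hmmem.2 hmb⟩
    have hder0 : deriv χ m = 0 :=
      (hmax.isLocalMax (Icc_mem_nhds hmI.1 hmI.2)).deriv_eq_zero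
    have hχm : 0 < χ m := by linarith
    obtain ⟨u, hu, hsubu⟩ :=
      mem_nhdsGT_iff_exists_Ioo_subset.1 (key m hm0 hder0 hχm).1
    have hmu : m < u := hu
    set w := min ((m+u)/2) ((m+b)/2) with hw
    have hw1 : m < w := lt_min (by linarith) (by linarith [hmI.2])
    have hwu : w < u := lt_of_le_of_lt (min_le_left _ _) (by linarith)
    have hwb : w < b := lt_of_le_of_lt (min_le_right _ _) (by linarith [hmI.2])
    have hlt : χ m < χ w :=
      mono_right m u hm0 hmu (fun x hx => hsubu hx) w ⟨hw1, hwu⟩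
    have : χ w ≤ χ m :=
      hmax ⟨le_of_lt (lt_of_lt_of_le hmI.1 (le_of_lt hw1)), le_of_lt hwb⟩
    linarith
  -- χ < 1
  have hlt1 : ∀ r, 0 < r → χ r < 1 := by
    intro r hr
    rcases lt_or_eq_of_le (hle1 r hr) with hlt | heq
    · exact hlt
    exfalso
    have hmax : IsMaxOn χ (Set.Ioi 0) r := by
      intro x hx
      simp only [Set.mem_setOf_eq, heq]
      exact hle1 x hx
    have hd0 : deriv χ r = 0 := (hmax.isLocalMax (hopen.mem_nhds hr)).deriv_eq_zero
    obtain ⟨u, hu, hsubu⟩ :=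
      mem_nhdsGT_iff_exists_Ioo_subset.1
        (key r hr hd0 (by rw [heq]; norm_num)).1
    have hru : r < u := hu
    have hmid : (r+u)/2 ∈ Set.Ioo r u := ⟨by linarith, by linarith⟩
    have h1 := mono_right r u hr hru (fun x hx => hsubu hx) ((r+u)/2) hmid
    have h2 := hle1 ((r+u)/2) (by linarith)
    rw [heq] at h1
    linarith
  -- χ > 0 via ODE uniqueness
  have hpos : ∀ r, 0 < r → 0 < χ r := by
    intro r hr
    rcases lt_or_eq_of_le (hnn r hr) with hlt | heq
    · exact hlt
    exfalso
    have hmin0 : IsMinOn χ (Set.Ioi 0) r := by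
      intro x hx
      simp only [Set.mem_setOf_eq, ← heq]
      exact hnn x hx
    have hd0 : deriv χ r = 0 := (hmin0.isLocalMin (hopen.mem_nhds hr)).deriv_eq_zero
    -- pick a with χ a > 1/2
    have hev0 : ∀ᶠ x in 𝓝[>] (0:ℝ), 1/2 < χ x :=
      h0.eventually (eventually_gt_nhds (by norm_num))
    have hmem : Set.Ioo (0:ℝ) r ∈ 𝓝[>] (0:ℝ) := Ioo_mem_nhdsGT_of_mem ⟨le_refl 0, hr⟩
    obtain ⟨a, ha2, ha1⟩ := (hev0.and (eventually_of_mem hmem fun x hx => hx)).exists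
    have hapos : 0 < a := ha1.1
    have har : a < r := ha1.2
    -- set up the first-order system and its Lipschitz bound
    set M : ℝ := 2*(r + 3*h)/(a*a) with hM
    have hMpos : 0 ≤ M := by positivity
    set P : ℝ → ℝ := fun t => 2*(t + 3*h)/(t*(t + 2*h)) with hP
    set Q : ℝ → ℝ := fun t => t/(t + 2*h) with hQ
    set cl : ℝ → ℝ := fun t => max a (min r t) with hcl
    have hclmem : ∀ t, cl t ∈ Set.Icc a r :=
      fun t => ⟨le_max_left _ _, max_le (le_of_lt har) (min_le_left _ _)⟩
    have hPb : ∀ u ∈ Set.Icc a r, |P u| ≤ M := by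
      intro u hu
      have hu0 : 0 < u := lt_of_lt_of_le hapos hu.1
      have h2u : 0 < u + 2*h := by linarith
      have h3u : 0 ≤ u + 3*h := by linarith
      rw [hP]
      simp only []
      rw [abs_of_nonneg (by positivity), hM]
      apply div_le_div₀ (by positivity) (by linarith [hu.2]) (by positivity)
      nlinarith [hu.1]
    have hQb : ∀ u ∈ Set.Icc a r, |Q u| ≤ 1 := by
      intro u hu
      have hu0 : 0 < u := lt_of_lt_of_le hapos hu.1
      have h2u : 0 < u + 2*h := by linarith
      rw [hQ]
      simp only []
      rw [abs_of_nonneg (by positivity)]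
      exact div_le_one_of_le₀ (by linarith) (by linarith)
    set K : NNReal := ⟨2 + M, by positivity⟩ with hK
    set v : ℝ → ℝ × ℝ → ℝ × ℝ := fun t z => (z.2, P (cl t) * z.2 + Q (cl t) * z.1) with hv
    have hlip : ∀ t, LipschitzWith K (v t) := by
      intro t
      apply LipschitzWith.of_dist_le_mul
      intro z w
      have hPt := hPb (cl t) (hclmem t)
      have hQt := hQb (cl t) (hclmem t)
      have hD1 : dist z.1 w.1 ≤ dist z w := by
        rw [Prod.dist_eq]; exact le_max_left _ _
      have hD2 : dist z.2 w.2 ≤ dist z w := by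
        rw [Prod.dist_eq]; exact le_max_right _ _
      have hDnn : 0 ≤ dist z w := dist_nonneg
      have hKc : (K : ℝ) = 2 + M := rfl
      rw [hv]
      simp only []
      rw [Prod.dist_eq]
      apply max_le
      · simp only []
        calc dist z.2 w.2 ≤ dist z w := hD2
          _ ≤ (K : ℝ) * dist z w := by rw [hKc]; nlinarith
      · simp only [Real.dist_eq]
        have hre : (P (cl t)*z.2 + Q (cl t)*z.1) - (P (cl t)*w.2 + Q (cl t)*w.1)
            = P (cl t)*(z.2-w.2) + Q (cl t)*(z.1-w.1) := by ring
        rw [hre]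
        have hd1' : |z.1 - w.1| ≤ dist z w := by rwa [Real.dist_eq] at hD1
        have hd2' : |z.2 - w.2| ≤ dist z w := by rwa [Real.dist_eq] at hD2
        calc |P (cl t) * (z.2-w.2) + Q (cl t) * (z.1-w.1)|
            ≤ |P (cl t) * (z.2-w.2)| + |Q (cl t) * (z.1-w.1)| := abs_add_le _ _
          _ = |P (cl t)| * |z.2-w.2| + |Q (cl t)| * |z.1-w.1| := by rw [abs_mul, abs_mul]
          _ ≤ M * dist z w + 1 * dist z w := by
              apply add_le_add
              · exact mul_le_mul hPt hd2' (abs_nonneg _) hMpos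
              · exact mul_le_mul hQt hd1' (abs_nonneg _) zero_le_one
          _ ≤ (K : ℝ) * dist z w := by rw [hKc]; nlinarith
    set F : ℝ → ℝ × ℝ := fun t => (χ t, deriv χ t) with hF
    have hFc : ContinuousOn F (Set.Icc a r) :=
      (hcont.mono (hsub hapos)).prodMk (hcont'.mono (hsub hapos))
    have hF' : ∀ t ∈ Set.Ioc a r, HasDerivWithinAt F (v t (F t)) (Set.Iic t) t := by
      intro t ht
      have ht0 : 0 < t := lt_trans hapos ht.1
      have hclt : cl t = t := by
        rw [hcl]
        simp only []
        rw [min_eq_right ht.2, max_eq_right (le_of_lt ht.1)]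
      have heqv : v t (F t) = (deriv χ t, deriv (deriv χ) t) := by
        rw [hv, hF]
        simp only []
        rw [hclt]
        refine Prod.ext rfl ?_
        simp only []
        rw [hODE t ht0, hP, hQ]
      rw [heqv]
      exact ((hd1 t ht0).prodMk (hd2 t ht0)).hasDerivWithinAt
    have hzero : ∀ t ∈ Set.Ioc a r,
        HasDerivWithinAt (fun _ : ℝ => ((0:ℝ),(0:ℝ))) (v t (0,0)) (Set.Iic t) t := by
      intro t ht
      have hv0 : v t ((0:ℝ),(0:ℝ)) = (0,0) := by
        rw [hv]
        simp
      rw [hv0]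
      exact hasDerivWithinAt_const t _ _
    have hend : F r = (fun _ : ℝ => ((0:ℝ),(0:ℝ))) r := by
      rw [hF]
      simp only []
      rw [← heq, hd0]
    have hEq := ODE_solution_unique_of_mem_Icc_left
      (s := fun _ => Set.univ) (fun t _ => (hlip t).lipschitzOnWith)
      hFc hF' (fun _ _ => Set.mem_univ _) continuousOn_const hzero
      (fun _ _ => Set.mem_univ _) hend
    have hFa := hEq (Set.left_mem_Icc.2 (le_of_lt har))
    have hχa : χ a = 0 := congrArg Prod.fst hFa
    linarith
  -- no point with positive derivative
  have noPos : ∀ s, 0 < s → ¬ (0 < deriv χ s) := by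
    intro s hs hds
    have hall : ∀ t, s ≤ t → 0 < deriv χ t := by
      by_contra hcon
      push_neg at hcon
      obtain ⟨t, hst, hdt⟩ := hcon
      have hst' : s < t := by
        rcases eq_or_lt_of_le hst with e | e
        · exfalso
          rw [← e] at hdt
          linarith
        · exact e
      have hZne : ∃ u ∈ Set.Icc s t, deriv χ u = 0 := by
        rcases eq_or_lt_of_le hdt with e | e
        · exact ⟨t, ⟨hst, le_refl t⟩, e⟩
        · obtain ⟨u, hu, hu0⟩ := intermediate_value_Icc' hst (hcont'.mono (hsub hs))
            ⟨le_of_lt e, le_of_lt hds⟩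
          exact ⟨u, hu, hu0⟩
      set Z : Set ℝ := Set.Icc s t ∩ deriv χ ⁻¹' {0} with hZdef
      have hZclosed : IsClosed Z :=
        (hcont'.mono (hsub hs)).preimage_isClosed_of_isClosed isClosed_Icc isClosed_singleton
      have hZne' : Z.Nonempty := by
        obtain ⟨u, hu, hu0⟩ := hZne
        exact ⟨u, hu, hu0⟩
      have hZbdd : BddBelow Z := ⟨s, fun u hu => hu.1.1⟩
      set t₀ := sInf Z with ht₀def
      have ht₀ : t₀ ∈ Z := hZclosed.csInf_mem hZne' hZbdd
      have ht₀mem : t₀ ∈ Set.Icc s t := ht₀.1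
      have hd₀ : deriv χ t₀ = 0 := ht₀.2
      have hst₀ : s < t₀ := by
        rcases eq_or_lt_of_le ht₀mem.1 with e | e
        · exfalso
          rw [← e] at hd₀
          linarith
        · exact e
      have hpre : ∀ u, u ∈ Set.Ico s t₀ → 0 < deriv χ u := by
        intro u hu
        rcases lt_trichotomy (deriv χ u) 0 with hlt | he | hgt
        · exfalso
          obtain ⟨w, hw, hw0⟩ := intermediate_value_Icc' hu.1 (hcont'.mono (hsub hs))
            ⟨le_of_lt hlt, le_of_lt hds⟩
          have hwt : w ≤ t := le_trans hw.2 (le_trans (le_of_lt hu.2) ht₀mem.2)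
          have : t₀ ≤ w := csInf_le hZbdd ⟨⟨hw.1, hwt⟩, hw0⟩
          have : w ≤ u := hw.2
          linarith [hu.2]
        · exfalso
          have hut : u ≤ t := le_trans (le_of_lt hu.2) ht₀mem.2
          have : t₀ ≤ u := csInf_le hZbdd ⟨⟨hu.1, hut⟩, he⟩
          linarith [hu.2]
        · exact hgt
      have ht₀pos : 0 < t₀ := lt_trans hs hst₀
      have hkey := (key t₀ ht₀pos hd₀ (hpos t₀ ht₀pos)).2
      have hm : Set.Ioo s t₀ ∈ 𝓝[<] t₀ := Ioo_mem_nhdsLT_of_mem ⟨hst₀, le_refl t₀⟩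
      obtain ⟨x, hx1, hx2⟩ := (hkey.and (eventually_of_mem hm fun x hx => hx)).exists
      exact absurd (hpre x ⟨le_of_lt hx2.1, hx2.2⟩) (not_lt.2 (le_of_lt hx1))
    have hSM : StrictMonoOn χ (Set.Ici s) := by
      apply strictMonoOn_of_deriv_pos (convex_Ici s)
        (hcont.mono fun x hx => lt_of_lt_of_le hs hx)
      intro x hx
      rw [interior_Ici] at hx
      exact hall x (le_of_lt hx)
    have h1 : 0 < χ (s+1) := hpos _ (by linarith)
    have hev := hinf.eventually (eventually_lt_nhds h1)
    obtain ⟨x, hx1, hx2⟩ := (hev.and (eventually_gt_atTop (s+1))).exists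
    have : χ (s+1) < χ x := hSM (by simp only [Set.mem_Ici]; linarith) (by simp only [Set.mem_Ici]; linarith) hx2
    linarith
  intro r hr
  refine ⟨hpos r hr, hlt1 r hr, ?_⟩
  rcases lt_trichotomy (deriv χ r) 0 with hlt | he | hgt
  · exact hlt
  · exfalso
    obtain ⟨u, hu, hsubu⟩ :=
      mem_nhdsGT_iff_exists_Ioo_subset.1 (key r hr he (hpos r hr)).1
    have hru : r < u := hu
    have hx : (r+u)/2 ∈ Set.Ioo r u := ⟨by linarith, by linarith⟩
    exact noPos _ (by linarith) (hsubu hx)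
  · exact absurd hgt (noPos r hr)
end

section
/- For all r > 0: ((1+r)e^{-r} − (1−r)e^{r})/2 ≤ 4 · r⁴·(2r)^{-1}·(1+2r)^{-2}·e^{r}, i.e. (1+r)e^{-r} − (1−r)e^{r} ≤ (4·r³·e^{r})/(1+2r)², and the constant 4 is the supremum of the ratio. -/
open Real

/-- X₄ estimate: (1+r)e^{-r} − (1−r)e^{r} ≤ 4r³e^{r}/(1+2r)² for all r > 0
(equivalently υ(r) ≤ 4·r⁴(2r)⁻¹(1+2r)⁻²e^r), and 4 is the supremum of the ratio. -/
theorem stmt17 :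
    (∀ r : ℝ, 0 < r →
      (1 + r) * Real.exp (-r) - (1 - r) * Real.exp r ≤
        4 * r ^ 3 * Real.exp r / (1 + 2 * r) ^ 2) ∧
    IsLUB {y : ℝ | ∃ r : ℝ, 0 < r ∧
      y = ((1 + r) * Real.exp (-r) - (1 - r) * Real.exp r) /
        (r ^ 3 * Real.exp r / (1 + 2 * r) ^ 2)} 4 := by
  have key : ∀ r : ℝ, 0 < r →
      (1 + r) * Real.exp (-r) - (1 - r) * Real.exp r ≤
        4 * r ^ 3 * Real.exp r / (1 + 2 * r) ^ 2 := by
    intro r hr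
    have hE := Real.exp_pos r
    have hcube : 1 + 2*r + 2*r^2 + (4/3)*r^3 ≤ Real.exp (2*r) := by
      have h := Real.sum_le_exp_of_nonneg (by linarith : (0:ℝ) ≤ 2*r) 4
      simp [Finset.sum_range_succ, Nat.factorial] at h
      nlinarith [h]
    have hsq : Real.exp (2*r) = Real.exp r ^ 2 := by
      rw [two_mul, Real.exp_add, sq]
    have hkey : (1+r)*(1+2*r)^2 ≤ (1+3*r) * Real.exp r ^ 2 := by
      rw [← hsq]; nlinarith [hcube, hr]
    rw [Real.exp_neg, le_div_iff₀ (by positivity : (0:ℝ) < (1+2*r)^2)]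
    have hu : (Real.exp r)⁻¹ * Real.exp r = 1 := inv_mul_cancel₀ hE.ne'
    nlinarith [hkey, hE, hu, mul_pos hE hE, inv_pos.mpr hE, sq_nonneg (Real.exp r), hr]
  refine ⟨key, ?_, ?_⟩
  · rintro y ⟨r, hr, rfl⟩
    have hden : 0 < r^3 * Real.exp r / (1+2*r)^2 := by positivity
    rw [div_le_iff₀ hden]
    have h := key r hr
    calc (1 + r) * Real.exp (-r) - (1 - r) * Real.exp r
        ≤ 4 * r ^ 3 * Real.exp r / (1 + 2 * r) ^ 2 := h
      _ = 4 * (r ^ 3 * Real.exp r / (1 + 2 * r) ^ 2) := by ring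
  · intro b hb
    by_contra hlt
    push_neg at hlt
    have hc0 : 0 < 4 - b := by linarith
    set r := max 1 (2 / Real.sqrt (4-b)) with hrdef
    have hr1 : (1:ℝ) ≤ r := le_max_left _ _
    have hr0 : 0 < r := lt_of_lt_of_le one_pos hr1
    have hrs : 2 / Real.sqrt (4-b) ≤ r := le_max_right _ _
    have hsq : 0 < Real.sqrt (4-b) := Real.sqrt_pos.mpr hc0
    have h2 : 2 ≤ r * Real.sqrt (4-b) := by
      rw [div_le_iff₀ hsq] at hrs; linarith
    have hr2 : 4 ≤ (4-b) * r^2 := by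
      nlinarith [Real.sq_sqrt hc0.le, h2, hsq, hr0]
    have hmem : ((1 + r) * Real.exp (-r) - (1 - r) * Real.exp r) /
        (r ^ 3 * Real.exp r / (1 + 2 * r) ^ 2) ∈ {y : ℝ | ∃ r : ℝ, 0 < r ∧
      y = ((1 + r) * Real.exp (-r) - (1 - r) * Real.exp r) /
        (r ^ 3 * Real.exp r / (1 + 2 * r) ^ 2)} := ⟨r, hr0, rfl⟩
    have hle := hb hmem
    have hden : 0 < r^3 * Real.exp r / (1+2*r)^2 := by positivity
    rw [div_le_iff₀ hden] at hle
    have hE := Real.exp_pos r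
    have hEn := Real.exp_pos (-r)
    have hpoly : b * r^3 ≤ (r-1)*(1+2*r)^2 := by nlinarith [hr2, hr1, hr0]
    have hbd : b * (r^3 * Real.exp r / (1+2*r)^2) ≤ (r-1) * Real.exp r := by
      rw [mul_div_assoc', div_le_iff₀ (by positivity : (0:ℝ) < (1+2*r)^2)]
      nlinarith [hpoly, hE]
    nlinarith [hle, hbd, mul_pos (show (0:ℝ) < 1+r by linarith) hEn]
end
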